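/- arXiv:2104.08300 — 7 statements merged into one kernel-verified Lean document; each statement's English description precedes it below -/
import Mathlib

section
/- Under consistency, positivity, and the tilting assumption at level t, the mean potential outcome is identified from the observed-data distribution: E[Y(t)] = E[ μ_t(Y;X)·π_t(X) + ( μ_t(Y e^{γ_t s_t(Y)};X) / μ_t(e^{γ_t s_t(Y)};X) )·π_{1−t}(X) ]. -/
open MeasureTheory Real

/-!
Split `Y(t) = Y(t)·1{T=t} + Y(t)·1{T=1-t}` and condition on `X`. By consistency the first part
is observed, with conditional mean `μ_t(Y;X)·π_t(X)`. The second is not, but the tilting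
assumption for `g = id` rewrites `E[Y(t)·1{T=1-t} | X]` as
`E[Y e^{γ s(Y)}·1{T=t} | X] / E[e^{γ s(Y)}·1{T=t} | X] · π_{1-t}(X)`, and in this ratio the
factors `π_t(X)` of the two conditional means cancel.
-/

theorem div_div_div_mul_eq_of_mul_eq_mul {K : Type*} [Field K] {a b c d q : K}
    (hq : q ≠ 0) (hb : b ≠ 0) (h : a * b = c * d) : c / q / (b / q) * d = a := by
  rw [div_div_div_cancel_right₀ hq, div_mul_eq_mul_div, ← h, mul_div_cancel_right₀ _ hb]

theorem mul_ite_add_mul_ite_one_sub {a t : ℝ} (ha : a = 0 ∨ a = 1) (ht : t = 0 ∨ t = 1)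
    (x : ℝ) :
    x * (if a = t then 1 else 0) + x * (if a = 1 - t then 1 else 0) = x := by
  rcases ha with rfl | rfl <;> rcases ht with rfl | rfl <;> norm_num

theorem MeasureTheory.Integrable.mul_ite_eq {Ω β : Type*} [MeasurableSpace Ω]
    [MeasurableSpace β] [MeasurableSingletonClass β] [DecidableEq β] {μ : Measure Ω} {f : Ω → ℝ}
    (hf : Integrable f μ) {T : Ω → β} (hT : Measurable T) (c : β) :
    Integrable (fun ω => f ω * if T ω = c then 1 else 0) μ := by
  refine (hf.indicator (hT (measurableSet_singleton c))).congr (ae_of_all _ fun ω => ?_)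
  by_cases h : T ω = c <;> simp [h]

theorem integral_eq_integral_condExp_add_condExp {Ω E : Type*} {m m₀ : MeasurableSpace Ω}
    [NormedAddCommGroup E] [NormedSpace ℝ E] [CompleteSpace E] {μ : Measure Ω}
    (hm : m ≤ m₀) [SigmaFinite (μ.trim hm)] {f g h : Ω → E} (hfgh : ∀ ω, f ω = g ω + h ω)
    (hg : Integrable g μ) (hh : Integrable h μ) :
    ∫ ω, f ω ∂μ = ∫ ω, (μ[g|m] ω + μ[h|m] ω) ∂μ := by
  rw [integral_add integrable_condExp integrable_condExp, integral_condExp hm,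
    integral_condExp hm, ← integral_add hg hh]
  exact integral_congr_ae (ae_of_all _ hfgh)

theorem ae_imp_eq_potentialOutcome_of_consistency {Ω : Type*} [MeasurableSpace Ω]
    {P : Measure Ω} {T Y Y₀ Y₁ : Ω → ℝ} (t : ℝ)
    (hcons : ∀ᵐ ω ∂P, Y ω = if T ω = 1 then Y₁ ω else Y₀ ω) :
    ∀ᵐ ω ∂P, T ω = t → Y ω = (if t = 1 then Y₁ else Y₀) ω := by
  filter_upwards [hcons] with ω hω hTt
  rw [hω, hTt]
  split_ifs <;> rfl

theorem condExp_mul_ite_congr_of_ae_imp_eq {Ω β : Type*} [DecidableEq β]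
    {m m₀ : MeasurableSpace Ω} {μ : Measure Ω} {T : Ω → β} {t : β} {Y Y' : Ω → ℝ}
    (h : ∀ᵐ ω ∂μ, T ω = t → Y ω = Y' ω) (φ : ℝ → ℝ) :
    μ[fun ω => φ (Y ω) * (if T ω = t then 1 else 0)|m] =ᵐ[μ]
      μ[fun ω => φ (Y' ω) * (if T ω = t then 1 else 0)|m] := by
  refine condExp_congr_ae ?_
  filter_upwards [h] with ω hω
  by_cases hTt : T ω = t <;> simp [hTt, hω]

theorem sensitivity_identification_mean_potential_outcome_general
    {Ω : Type*} [MeasurableSpace Ω] (P : Measure Ω) [IsProbabilityMeasure P]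
    {p : ℕ} (X : Ω → (Fin p → ℝ)) (T : Ω → ℝ) (Y : Ω → ℝ) (Y0 Y1 : Ω → ℝ)
    (hX : Measurable X) (hT : Measurable T)
    (hTval : ∀ ω, T ω = 0 ∨ T ω = 1)
    -- fixed treatment level `t ∈ {0,1}` and the corresponding potential outcome `Yt`
    (t : ℝ) (ht : t = 0 ∨ t = 1)
    (Yt : Ω → ℝ) (hYt : Yt = if t = 1 then Y1 else Y0)
    -- consistency : `Y = Y(T)`
    (hcons : ∀ᵐ ω ∂P, Y ω = if T ω = 1 then Y1 ω else Y0 ω)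
    -- tilting function and sensitivity parameter
    (s : ℝ → ℝ) (γ : ℝ)
    -- versions of the conditional treatment probabilities given `σ(X)`
    (πt πs : (Fin p → ℝ) → ℝ)
    (hπsv : (fun ω => πs (X ω)) =ᵐ[P]
      P[(fun ω => if T ω = 1 - t then (1 : ℝ) else 0) | MeasurableSpace.comap X inferInstance])
    -- positivity
    (ε : ℝ) (hε : 0 < ε)
    (hpos : ∀ᵐ ω ∂P, ε ≤ πt (X ω) ∧ πt (X ω) ≤ 1 - ε)
    -- integrability assumptions
    (hYtInt : Integrable Yt P)
    -- the tilted conditional expectation is a.s. positive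
    (hCpos : ∀ᵐ ω ∂P, 0 <
      (P[(fun ω => Real.exp (γ * s (Yt ω)) * (if T ω = t then (1 : ℝ) else 0)) |
        MeasurableSpace.comap X inferInstance]) ω)
    -- tilting assumption at level `t` (for every bounded measurable `g`, and for `g = id`)
    (htilt : ∀ g : ℝ → ℝ, Measurable g → ((∃ C, ∀ y, |g y| ≤ C) ∨ g = id) →
      ∀ᵐ ω ∂P,
        (P[(fun ω => g (Yt ω) * (if T ω = 1 - t then (1 : ℝ) else 0)) |
          MeasurableSpace.comap X inferInstance]) ω *
        (P[(fun ω => Real.exp (γ * s (Yt ω)) * (if T ω = t then (1 : ℝ) else 0)) |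
          MeasurableSpace.comap X inferInstance]) ω =
        (P[(fun ω => g (Yt ω) * Real.exp (γ * s (Yt ω)) * (if T ω = t then (1 : ℝ) else 0)) |
          MeasurableSpace.comap X inferInstance]) ω *
        (P[(fun ω => if T ω = 1 - t then (1 : ℝ) else 0) |
          MeasurableSpace.comap X inferInstance]) ω)
    -- versions of the conditional means `μ_t(g(Y); X) = E[g(Y)1{T=t}|σ(X)]/π_t(X)`
    (muY muE muYE : (Fin p → ℝ) → ℝ)
    (hmuY : (fun ω => muY (X ω)) =ᵐ[P] fun ω =>
      (P[(fun ω => Y ω * (if T ω = t then (1 : ℝ) else 0)) |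
        MeasurableSpace.comap X inferInstance]) ω / πt (X ω))
    (hmuE : (fun ω => muE (X ω)) =ᵐ[P] fun ω =>
      (P[(fun ω => Real.exp (γ * s (Y ω)) * (if T ω = t then (1 : ℝ) else 0)) |
        MeasurableSpace.comap X inferInstance]) ω / πt (X ω))
    (hmuYE : (fun ω => muYE (X ω)) =ᵐ[P] fun ω =>
      (P[(fun ω => Y ω * Real.exp (γ * s (Y ω)) * (if T ω = t then (1 : ℝ) else 0)) |
        MeasurableSpace.comap X inferInstance]) ω / πt (X ω)) :
    ∫ ω, Yt ω ∂P =
      ∫ ω, (muY (X ω) * πt (X ω) + (muYE (X ω) / muE (X ω)) * πs (X ω)) ∂P := by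
  have hm : MeasurableSpace.comap X inferInstance ≤ _ := hX.comap_le
  have hYeq : ∀ᵐ ω ∂P, T ω = t → Y ω = Yt ω :=
    hYt ▸ ae_imp_eq_potentialOutcome_of_consistency t hcons
  have hπt_ne : ∀ᵐ ω ∂P, πt (X ω) ≠ 0 := hpos.mono fun ω h => (hε.trans_le h.1).ne'
  have hobserved : ∀ᵐ ω ∂P, muY (X ω) * πt (X ω) =
      P[fun ω => Yt ω * (if T ω = t then 1 else 0)|MeasurableSpace.comap X inferInstance] ω := by
    filter_upwards [hmuY, hπt_ne, condExp_mul_ite_congr_of_ae_imp_eq hYeq id] with ω hY hne hce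
    rw [hY, div_mul_cancel₀ _ hne]
    exact hce
  have htilted : ∀ᵐ ω ∂P, muYE (X ω) / muE (X ω) * πs (X ω) =
      P[fun ω => Yt ω * (if T ω = 1 - t then 1 else 0)|MeasurableSpace.comap X inferInstance] ω := by
    filter_upwards [hmuYE, hmuE, hπt_ne, hCpos, htilt id measurable_id (Or.inr rfl), hπsv,
      condExp_mul_ite_congr_of_ae_imp_eq hYeq fun y => exp (γ * s y),
      condExp_mul_ite_congr_of_ae_imp_eq hYeq fun y => y * exp (γ * s y)]
      with ω hYE hE hne hB htilt_id hD hceE hceYE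
    rw [hYE, hE, hD, hceE, hceYE]
    exact div_div_div_mul_eq_of_mul_eq_mul hne hB.ne' htilt_id
  rw [integral_eq_integral_condExp_add_condExp hm
    (fun ω => (mul_ite_add_mul_ite_one_sub (hTval ω) ht (Yt ω)).symm)
    (hYtInt.mul_ite_eq hT t) (hYtInt.mul_ite_eq hT (1 - t))]
  refine integral_congr_ae ?_
  filter_upwards [hobserved, htilted] with ω h₁ h₂
  rw [h₁, h₂]

/-- Under consistency, positivity and the tilting assumption at level `t`,
the mean potential outcome is identified:
`E[Y(t)] = E[ μ_t(Y;X)·π_t(X) + (μ_t(Y e^{γ_t s_t(Y)};X)/μ_t(e^{γ_t s_t(Y)};X))·π_{1-t}(X) ]`. -/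
theorem sensitivity_identification_mean_potential_outcome
    {Ω : Type*} [MeasurableSpace Ω] (P : Measure Ω) [IsProbabilityMeasure P]
    {p : ℕ} (X : Ω → (Fin p → ℝ)) (T : Ω → ℝ) (Y : Ω → ℝ) (Y0 Y1 : Ω → ℝ)
    (hX : Measurable X) (hT : Measurable T) (hY : Measurable Y)
    (hY0 : Measurable Y0) (hY1 : Measurable Y1)
    (hTval : ∀ ω, T ω = 0 ∨ T ω = 1)
    -- fixed treatment level `t ∈ {0,1}` and the corresponding potential outcome `Yt`
    (t : ℝ) (ht : t = 0 ∨ t = 1)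
    (Yt : Ω → ℝ) (hYt : Yt = if t = 1 then Y1 else Y0)
    -- consistency : `Y = Y(T)`
    (hcons : ∀ᵐ ω ∂P, Y ω = if T ω = 1 then Y1 ω else Y0 ω)
    -- tilting function and sensitivity parameter
    (s : ℝ → ℝ) (hs : Measurable s) (γ : ℝ)
    -- versions of the conditional treatment probabilities given `σ(X)`
    (πt πs : (Fin p → ℝ) → ℝ) (hπt : Measurable πt) (hπs : Measurable πs)
    (hπtv : (fun ω => πt (X ω)) =ᵐ[P]
      P[(fun ω => if T ω = t then (1 : ℝ) else 0) | MeasurableSpace.comap X inferInstance])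
    (hπsv : (fun ω => πs (X ω)) =ᵐ[P]
      P[(fun ω => if T ω = 1 - t then (1 : ℝ) else 0) | MeasurableSpace.comap X inferInstance])
    -- positivity
    (ε : ℝ) (hε : 0 < ε)
    (hpos : ∀ᵐ ω ∂P, ε ≤ πt (X ω) ∧ πt (X ω) ≤ 1 - ε)
    -- integrability assumptions
    (hYtInt : Integrable Yt P)
    (hExpInt : Integrable (fun ω => Real.exp (γ * s (Yt ω))) P)
    (hYtExpInt : Integrable (fun ω => Yt ω * Real.exp (γ * s (Yt ω))) P)
    -- the tilted conditional expectation is a.s. positive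
    (hCpos : ∀ᵐ ω ∂P, 0 <
      (P[(fun ω => Real.exp (γ * s (Yt ω)) * (if T ω = t then (1 : ℝ) else 0)) |
        MeasurableSpace.comap X inferInstance]) ω)
    -- tilting assumption at level `t` (for every bounded measurable `g`, and for `g = id`)
    (htilt : ∀ g : ℝ → ℝ, Measurable g → ((∃ C, ∀ y, |g y| ≤ C) ∨ g = id) →
      ∀ᵐ ω ∂P,
        (P[(fun ω => g (Yt ω) * (if T ω = 1 - t then (1 : ℝ) else 0)) |
          MeasurableSpace.comap X inferInstance]) ω *
        (P[(fun ω => Real.exp (γ * s (Yt ω)) * (if T ω = t then (1 : ℝ) else 0)) |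
          MeasurableSpace.comap X inferInstance]) ω =
        (P[(fun ω => g (Yt ω) * Real.exp (γ * s (Yt ω)) * (if T ω = t then (1 : ℝ) else 0)) |
          MeasurableSpace.comap X inferInstance]) ω *
        (P[(fun ω => if T ω = 1 - t then (1 : ℝ) else 0) |
          MeasurableSpace.comap X inferInstance]) ω)
    -- versions of the conditional means `μ_t(g(Y); X) = E[g(Y)1{T=t}|σ(X)]/π_t(X)`
    (muY muE muYE : (Fin p → ℝ) → ℝ)
    (hmuY : (fun ω => muY (X ω)) =ᵐ[P] fun ω =>
      (P[(fun ω => Y ω * (if T ω = t then (1 : ℝ) else 0)) |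
        MeasurableSpace.comap X inferInstance]) ω / πt (X ω))
    (hmuE : (fun ω => muE (X ω)) =ᵐ[P] fun ω =>
      (P[(fun ω => Real.exp (γ * s (Y ω)) * (if T ω = t then (1 : ℝ) else 0)) |
        MeasurableSpace.comap X inferInstance]) ω / πt (X ω))
    (hmuYE : (fun ω => muYE (X ω)) =ᵐ[P] fun ω =>
      (P[(fun ω => Y ω * Real.exp (γ * s (Y ω)) * (if T ω = t then (1 : ℝ) else 0)) |
        MeasurableSpace.comap X inferInstance]) ω / πt (X ω)) :
    ∫ ω, Yt ω ∂P =
      ∫ ω, (muY (X ω) * πt (X ω) + (muYE (X ω) / muE (X ω)) * πs (X ω)) ∂P :=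
  sensitivity_identification_mean_potential_outcome_general P X T Y Y0 Y1 hX hT hTval t ht Yt hYt
    hcons s γ πt πs hπsv ε hε hpos hYtInt hCpos htilt muY muE muYE hmuY hmuE hmuYE
end

section
/- Under positivity and the tilting assumption at level t, the conditional probability of receiving treatment 1−t given X and the potential outcome Y(t) has the logistic representation: almost surely E[1{T=1−t} | σ(X, Y(t))] = expit( h(X) + γ_t s_t(Y(t)) ), where h(X) := logit(π_{1−t}(X)) − log C_t(X), C_t(X) := E[e^{γ_t s_t(Y(t))} 1{T=t} | σ(X)] / π_t(X), expit(u) = e^u/(1+e^u) and logit(p) = log(p/(1−p)). -/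
open MeasureTheory Real Set

/-! Write `a = E[1{T=1−t} | σ(X)]`, `c = E[e^{γ s(Y)} 1{T=t} | σ(X)]` and `W = e^{γ s(Y)}`.
Taking `g = 1_B` in the tilting identity and integrating it over `{X ∈ A}` (pulling `c` and `a`
in and out of the conditional expectations) shows that `1{T=1−t} c` and `1{T=t} W a` have the
same integral over every set `{X ∈ A} ∩ {Y ∈ B}`. These sets form a π-system generating
`σ(X, Y)`, so both functions have the same conditional expectation given `σ(X, Y)`. Pulling
out the `σ(X, Y)`-measurable factors gives `q c = (1 - q) a W` for
`q = E[1{T=1−t} | σ(X, Y)]`, i.e. `q = a W / (a W + c)`; since `a = π_{1−t} = 1 − π_t` and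
`c = π_t C_t`, this is the logistic form. -/

section

variable {Ω : Type*} {m m₂ m0 : MeasurableSpace Ω} {μ : Measure Ω}

theorem isPiSystem_image2_inter (m₁ m₂ : MeasurableSpace Ω) :
    IsPiSystem (image2 (· ∩ ·) {s | MeasurableSet[m₁] s} {t | MeasurableSet[m₂] t}) := by
  rintro _ ⟨s₁, hs₁, t₁, ht₁, rfl⟩ _ ⟨s₂, hs₂, t₂, ht₂, rfl⟩ -
  exact ⟨s₁ ∩ s₂, hs₁.inter hs₂, t₁ ∩ t₂, ht₁.inter ht₂, inter_inter_inter_comm _ _ _ _⟩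

theorem generateFrom_image2_inter (m₁ m₂ : MeasurableSpace Ω) :
    MeasurableSpace.generateFrom
      (image2 (· ∩ ·) {s | MeasurableSet[m₁] s} {t | MeasurableSet[m₂] t}) = m₁ ⊔ m₂ := by
  refine le_antisymm (MeasurableSpace.generateFrom_le ?_) (sup_le (fun s hs => ?_) fun t ht => ?_)
  · rintro _ ⟨s, hs, t, ht, rfl⟩
    exact (le_sup_left (a := m₁) s hs).inter (le_sup_right (b := m₂) t ht)
  · exact MeasurableSpace.measurableSet_generateFrom ⟨s, hs, univ, .univ, inter_univ s⟩
  · exact MeasurableSpace.measurableSet_generateFrom ⟨univ, .univ, t, ht, univ_inter t⟩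

theorem setIntegral_eq_of_isPiSystem (hm : m ≤ m0) {S : Set (Set Ω)}
    (hgen : m = MeasurableSpace.generateFrom S) (hS : IsPiSystem S) {f g : Ω → ℝ}
    (hf : Integrable f μ) (hg : Integrable g μ) (huniv : ∫ x, f x ∂μ = ∫ x, g x ∂μ)
    (hSeq : ∀ s ∈ S, ∫ x in s, f x ∂μ = ∫ x in s, g x ∂μ) {s : Set Ω}
    (hs : MeasurableSet[m] s) : ∫ x in s, f x ∂μ = ∫ x in s, g x ∂μ := by
  induction s, hs using MeasurableSpace.induction_on_inter hgen hS with
  | empty => simp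
  | basic s hs => exact hSeq s hs
  | compl s hs ih =>
    rw [setIntegral_compl (hm s hs) hf, setIntegral_compl (hm s hs) hg, huniv, ih]
  | iUnion s hd hsm ih =>
    rw [integral_iUnion (fun i => hm _ (hsm i)) hd hf.integrableOn,
      integral_iUnion (fun i => hm _ (hsm i)) hd hg.integrableOn]
    exact tsum_congr ih

theorem condExp_ae_eq_of_isPiSystem [IsFiniteMeasure μ] (hm : m ≤ m0) {S : Set (Set Ω)}
    (hgen : m = MeasurableSpace.generateFrom S) (hS : IsPiSystem S) {f g : Ω → ℝ}
    (hf : Integrable f μ) (hg : Integrable g μ) (huniv : ∫ x, f x ∂μ = ∫ x, g x ∂μ)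
    (hSeq : ∀ s ∈ S, ∫ x in s, f x ∂μ = ∫ x in s, g x ∂μ) : μ[f | m] =ᵐ[μ] μ[g | m] := by
  refine ae_eq_of_forall_setIntegral_eq_of_sigmaFinite' hm
    (fun _ _ _ => integrable_condExp.integrableOn) (fun _ _ _ => integrable_condExp.integrableOn)
    (fun s hs _ => ?_) stronglyMeasurable_condExp.aestronglyMeasurable
    stronglyMeasurable_condExp.aestronglyMeasurable
  rw [setIntegral_condExp hm hf hs, setIntegral_condExp hm hg hs]
  exact setIntegral_eq_of_isPiSystem hm hgen hS hf hg huniv hSeq hs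

theorem setIntegral_condExp_mul (hm : m ≤ m0) [SigmaFinite (μ.trim hm)] {f φ : Ω → ℝ}
    (hφ : StronglyMeasurable[m] φ) (hf : Integrable f μ) (hfφ : Integrable (f * φ) μ)
    {s : Set Ω} (hs : MeasurableSet[m] s) :
    ∫ x in s, μ[f | m] x * φ x ∂μ = ∫ x in s, f x * φ x ∂μ := by
  refine Eq.trans ?_ (setIntegral_condExp hm hfφ hs)
  refine setIntegral_congr_ae (hm s hs) ?_
  filter_upwards [condExp_mul_of_stronglyMeasurable_right hφ hfφ hf] with x hx _
  exact hx.symm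

theorem condExp_sup_mul_ae_eq_of_condExp_indicator [IsFiniteMeasure μ] (hm : m ≤ m0)
    (hm₂ : m₂ ≤ m0) {f g φ ψ : Ω → ℝ} (hφ : StronglyMeasurable[m] φ) (hψ : StronglyMeasurable[m] ψ)
    (hf : Integrable f μ) (hg : Integrable g μ) (hfφ : Integrable (f * φ) μ)
    (hgψ : Integrable (g * ψ) μ)
    (h : ∀ t, MeasurableSet[m₂] t → μ[t.indicator f | m] * φ =ᵐ[μ] μ[t.indicator g | m] * ψ) :
    μ[f * φ | m ⊔ m₂] =ᵐ[μ] μ[g * ψ | m ⊔ m₂] := by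
  have hinter : ∀ s t, MeasurableSet[m] s → MeasurableSet[m₂] t →
      ∫ x in s ∩ t, (f * φ) x ∂μ = ∫ x in s ∩ t, (g * ψ) x ∂μ := by
    intro s t hs ht
    have hind (u v : Ω → ℝ) : t.indicator (u * v) = t.indicator u * v :=
      funext fun x => indicator_mul_left t u v
    rw [← setIntegral_indicator (hm₂ t ht), ← setIntegral_indicator (hm₂ t ht), hind, hind]
    simp only [Pi.mul_apply]
    rw [← setIntegral_condExp_mul hm hφ (hf.indicator (hm₂ t ht))
        (hind f φ ▸ hfφ.indicator (hm₂ t ht)) hs,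
      ← setIntegral_condExp_mul hm hψ (hg.indicator (hm₂ t ht))
        (hind g ψ ▸ hgψ.indicator (hm₂ t ht)) hs]
    exact setIntegral_congr_ae (hm s hs) ((h t ht).mono fun x hx _ => hx)
  refine condExp_ae_eq_of_isPiSystem (sup_le hm hm₂) (generateFrom_image2_inter m m₂).symm
    (isPiSystem_image2_inter m m₂) hfφ hgψ ?_ ?_
  · simpa using hinter univ univ .univ .univ
  · rintro _ ⟨s, hs, t, ht, rfl⟩
    exact hinter s t hs ht

theorem condExp_add_condExp_ae_eq_one [IsFiniteMeasure μ] (hm : m ≤ m0) {f g : Ω → ℝ}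
    (hf : Integrable f μ) (hg : Integrable g μ) (hfg : f + g = 1) :
    ∀ᵐ x ∂μ, μ[f | m] x + μ[g | m] x = 1 := by
  have h := condExp_add hf hg m
  rw [hfg, show (1 : Ω → ℝ) = fun _ => 1 from rfl, condExp_const hm] at h
  filter_upwards [h] with x hx
  exact hx.symm

theorem condExp_ae_eq_div_of_condExp_mul_eq [IsFiniteMeasure μ] (hm : m ≤ m0)
    {f g φ ψ : Ω → ℝ} (hφ : StronglyMeasurable[m] φ) (hψ : StronglyMeasurable[m] ψ)
    (hf : Integrable f μ) (hg : Integrable g μ) (hfg : f + g = 1)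
    (hfφ : Integrable (f * φ) μ) (hgψ : Integrable (g * ψ) μ)
    (h : μ[f * φ | m] =ᵐ[μ] μ[g * ψ | m]) (hne : ∀ᵐ x ∂μ, ψ x + φ x ≠ 0) :
    μ[f | m] =ᵐ[μ] ψ / (ψ + φ) := by
  filter_upwards [h, condExp_mul_of_stronglyMeasurable_right hφ hfφ hf,
    condExp_mul_of_stronglyMeasurable_right hψ hgψ hg, condExp_add_condExp_ae_eq_one hm hf hg hfg,
    hne] with x h hfφx hgψx hsum hne
  simp only [Pi.mul_apply, Pi.div_apply, Pi.add_apply] at h hfφx hgψx ⊢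
  rw [hfφx, hgψx] at h
  rw [eq_div_iff hne]
  linear_combination h + ψ x * hsum

theorem condExp_sup_ae_eq_of_tilt [IsFiniteMeasure μ] (hm : m ≤ m0) (hm₂ : m₂ ≤ m0)
    {f g w : Ω → ℝ} (hf : Integrable f μ) (hf_bdd : ∀ᵐ x ∂μ, |f x| ≤ 1) (hg : Integrable g μ)
    (hfg : f + g = 1) (hw : StronglyMeasurable[m₂] w) (hwg : Integrable (w * g) μ)
    (htilt : ∀ t, MeasurableSet[m₂] t →
      μ[t.indicator f | m] * μ[w * g | m] =ᵐ[μ] μ[t.indicator (w * g) | m] * μ[f | m])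
    (hne : ∀ᵐ x ∂μ, μ[f | m] x * w x + μ[w * g | m] x ≠ 0) :
    μ[f | m ⊔ m₂] =ᵐ[μ] μ[f | m] * w / (μ[f | m] * w + μ[w * g | m]) := by
  have hfc : Integrable (f * μ[w * g | m]) μ :=
    integrable_condExp.bdd_mul hf.aestronglyMeasurable hf_bdd
  have hwga : Integrable (w * g * μ[f | m]) μ :=
    hwg.mul_bdd integrable_condExp.aestronglyMeasurable (ae_bdd_abs_condExp_of_ae_bdd_abs hf_bdd)
  have hsup := condExp_sup_mul_ae_eq_of_condExp_indicator hm hm₂ stronglyMeasurable_condExp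
    stronglyMeasurable_condExp hf hwg hfc hwga htilt
  rw [show w * g * μ[f | m] = g * (μ[f | m] * w) by ring] at hwga hsup
  exact condExp_ae_eq_div_of_condExp_mul_eq (sup_le hm hm₂)
    (stronglyMeasurable_condExp.mono le_sup_left)
    (((stronglyMeasurable_condExp (m := m) (f := f) (μ := μ)).mono le_sup_left).mul
      (hw.mono le_sup_right))
    hf hg hfg hfc hwga hsup hne

end

theorem expit_logit_sub_log_add_eq {a C : ℝ} (ha₀ : 0 < a) (ha₁ : a < 1) (hC : 0 < C) (u : ℝ) :
    exp (log (a / (1 - a)) - log C + u) / (1 + exp (log (a / (1 - a)) - log C + u)) =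
      a * exp u / (a * exp u + (1 - a) * C) := by
  have h1a : 0 < 1 - a := by linarith
  rw [exp_add, exp_sub, exp_log (div_pos ha₀ h1a), exp_log hC]
  field_simp
  ring

theorem indicator_preimage_eq_indicator_one_mul {Ω β : Type*} (Y : Ω → β) (B : Set β)
    (f : Ω → ℝ) : (Y ⁻¹' B).indicator f = fun ω => B.indicator 1 (Y ω) * f ω := by
  ext ω
  by_cases h : Y ω ∈ B <;> simp [h]

theorem ite_eq_sub_add_ite_eq_eq_one {T t : ℝ} (hT : T = 0 ∨ T = 1) (ht : t = 0 ∨ t = 1) :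
    (if T = 1 - t then (1 : ℝ) else 0) + (if T = t then 1 else 0) = 1 := by
  rcases hT with rfl | rfl <;> rcases ht with rfl | rfl <;> norm_num

theorem abs_ite_one_zero_le (p : Prop) [Decidable p] : |(if p then (1 : ℝ) else 0)| ≤ 1 := by
  split_ifs <;> simp

theorem integrable_ite_eq {Ω : Type*} [MeasurableSpace Ω] {μ : Measure Ω} [IsFiniteMeasure μ]
    {T : Ω → ℝ} (hT : Measurable T) (t : ℝ) :
    Integrable (fun ω => if T ω = t then (1 : ℝ) else 0) μ :=
  .of_bound (Measurable.ite (hT (measurableSet_singleton t)) measurable_const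
    measurable_const).aestronglyMeasurable 1 (.of_forall fun _ => abs_ite_one_zero_le _)

theorem sensitivity_logistic_representation_general
    {Ω : Type*} [MeasurableSpace Ω] (P : Measure Ω) [IsProbabilityMeasure P]
    {p : ℕ} (X : Ω → (Fin p → ℝ)) (T : Ω → ℝ)
    (hX : Measurable X) (hT : Measurable T)
    (hTval : ∀ ω, T ω = 0 ∨ T ω = 1)
    -- fixed treatment level `t ∈ {0,1}` and the potential outcome `Y(t)`
    (t : ℝ) (ht : t = 0 ∨ t = 1)
    (Yt : Ω → ℝ) (hYtm : Measurable Yt)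
    -- tilting function and sensitivity parameter
    (s : ℝ → ℝ) (hs : Measurable s) (γ : ℝ)
    -- versions of the conditional treatment probabilities given `σ(X)`
    (πt πs : (Fin p → ℝ) → ℝ)
    (hπtv : (fun ω => πt (X ω)) =ᵐ[P]
      P[(fun ω => if T ω = t then (1 : ℝ) else 0) | MeasurableSpace.comap X inferInstance])
    (hπsv : (fun ω => πs (X ω)) =ᵐ[P]
      P[(fun ω => if T ω = 1 - t then (1 : ℝ) else 0) | MeasurableSpace.comap X inferInstance])
    -- positivity
    (ε : ℝ) (hε : 0 < ε)
    (hpos : ∀ᵐ ω ∂P, ε ≤ πt (X ω) ∧ πt (X ω) ≤ 1 - ε)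
    -- integrability of the exponential tilt
    (hExpInt : Integrable (fun ω => Real.exp (γ * s (Yt ω))) P)
    -- `C_t(X)`, a version of `E[e^{γ_t s_t(Y(t))}1{T=t}|σ(X)]/π_t(X)`, with `0 < C_t(X)` a.s.
    (Ct : (Fin p → ℝ) → ℝ)
    (hCtv : (fun ω => Ct (X ω)) =ᵐ[P] fun ω =>
      (P[(fun ω => Real.exp (γ * s (Yt ω)) * (if T ω = t then (1 : ℝ) else 0)) |
        MeasurableSpace.comap X inferInstance]) ω / πt (X ω))
    (hCpos : ∀ᵐ ω ∂P, 0 < Ct (X ω))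
    -- tilting assumption at level `t` (for every bounded measurable `g`)
    (htilt : ∀ g : ℝ → ℝ, Measurable g → (∃ C, ∀ y, |g y| ≤ C) →
      ∀ᵐ ω ∂P,
        (P[(fun ω => g (Yt ω) * (if T ω = 1 - t then (1 : ℝ) else 0)) |
          MeasurableSpace.comap X inferInstance]) ω *
        (P[(fun ω => Real.exp (γ * s (Yt ω)) * (if T ω = t then (1 : ℝ) else 0)) |
          MeasurableSpace.comap X inferInstance]) ω =
        (P[(fun ω => g (Yt ω) * Real.exp (γ * s (Yt ω)) * (if T ω = t then (1 : ℝ) else 0)) |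
          MeasurableSpace.comap X inferInstance]) ω *
        (P[(fun ω => if T ω = 1 - t then (1 : ℝ) else 0) |
          MeasurableSpace.comap X inferInstance]) ω) :
    (P[(fun ω => if T ω = 1 - t then (1 : ℝ) else 0) |
        MeasurableSpace.comap (fun ω => (X ω, Yt ω)) inferInstance]) =ᵐ[P]
      fun ω =>
        Real.exp (Real.log (πs (X ω) / (1 - πs (X ω))) - Real.log (Ct (X ω)) + γ * s (Yt ω)) /
          (1 + Real.exp (Real.log (πs (X ω) / (1 - πs (X ω))) - Real.log (Ct (X ω))
            + γ * s (Yt ω))) := by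
  set I₁ : Ω → ℝ := fun ω => if T ω = 1 - t then 1 else 0
  set I₀ : Ω → ℝ := fun ω => if T ω = t then 1 else 0
  set W : Ω → ℝ := fun ω => exp (γ * s (Yt ω))
  set a := P[I₁ | MeasurableSpace.comap X inferInstance]
  set c := P[W * I₀ | MeasurableSpace.comap X inferInstance]
  have hsum : I₁ + I₀ = 1 := funext fun ω => ite_eq_sub_add_ite_eq_eq_one (hTval ω) ht
  have hW : StronglyMeasurable[MeasurableSpace.comap Yt inferInstance] W :=
    (measurable_exp.comp (measurable_const.mul (hs.comp (comap_measurable Yt)))).stronglyMeasurable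
  have hWI₀ : Integrable (W * I₀) P :=
    hExpInt.mul_bdd (integrable_ite_eq hT t).aestronglyMeasurable
      (.of_forall fun _ => abs_ite_one_zero_le _)
  have htilt' : ∀ B, MeasurableSet[MeasurableSpace.comap Yt inferInstance] B →
      P[B.indicator I₁ | MeasurableSpace.comap X inferInstance] * c =ᵐ[P]
        P[B.indicator (W * I₀) | MeasurableSpace.comap X inferInstance] * a := by
    rintro _ ⟨B, hB, rfl⟩
    simp only [indicator_preimage_eq_indicator_one_mul, Pi.mul_apply, ← mul_assoc]
    exact htilt _ (measurable_const.indicator hB) ⟨1, fun y => by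
      by_cases h : y ∈ B <;> simp [h]⟩
  have hvals : ∀ᵐ ω ∂P, a ω = πs (X ω) ∧ c ω = πt (X ω) * Ct (X ω) ∧
      0 < πs (X ω) ∧ 1 - πs (X ω) = πt (X ω) ∧ 0 < πt (X ω) ∧ 0 < Ct (X ω) := by
    filter_upwards [hπsv, hπtv, hCtv, hpos, hCpos, condExp_add_condExp_ae_eq_one hX.comap_le
      (integrable_ite_eq hT _) (integrable_ite_eq hT t) hsum] with ω hπs hπt hCt hpos hCpos hπ
    have hπt₀ : 0 < πt (X ω) := hε.trans_le hpos.1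
    refine ⟨hπs.symm, ?_, by linarith, by linarith, hπt₀, hCpos⟩
    rw [hCt, mul_div_cancel₀ _ hπt₀.ne']
    rfl
  have hne : ∀ᵐ ω ∂P, a ω * W ω + c ω ≠ 0 := by
    filter_upwards [hvals] with ω ⟨ha, hc, hπs, _, hπt, hC⟩
    rw [ha, hc]
    positivity
  have hcore : P[I₁ | MeasurableSpace.comap X inferInstance ⊔
      MeasurableSpace.comap Yt inferInstance] =ᵐ[P] a * W / (a * W + c) :=
    condExp_sup_ae_eq_of_tilt hX.comap_le hYtm.comap_le (integrable_ite_eq hT _)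
      (.of_forall fun _ => abs_ite_one_zero_le _) (integrable_ite_eq hT t) hsum hW hWI₀ htilt' hne
  rw [show MeasurableSpace.comap (fun ω => (X ω, Yt ω)) inferInstance =
      MeasurableSpace.comap X inferInstance ⊔ MeasurableSpace.comap Yt inferInstance from
    MeasurableSpace.comap_prodMk X Yt]
  filter_upwards [hcore, hvals] with ω hω ⟨ha, hc, hπs, hπs₁, _, hC⟩
  rw [hω, expit_logit_sub_log_add_eq hπs (by linarith) hC]
  simp only [Pi.div_apply, Pi.mul_apply, Pi.add_apply, ha, hc, hπs₁]
  ring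

/-- Under positivity and the tilting assumption at level `t`, the conditional
probability of receiving treatment `1−t` given `X` and the potential outcome `Y(t)` has the
logistic representation
`E[1{T=1−t} | σ(X, Y(t))] = expit( h(X) + γ_t s_t(Y(t)) )` a.s., where
`h(X) = logit(π_{1−t}(X)) − log C_t(X)` and `C_t(X) = E[e^{γ_t s_t(Y(t))}1{T=t}|σ(X)]/π_t(X)`. -/
theorem sensitivity_logistic_representation
    {Ω : Type*} [MeasurableSpace Ω] (P : Measure Ω) [IsProbabilityMeasure P]
    {p : ℕ} (X : Ω → (Fin p → ℝ)) (T : Ω → ℝ)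
    (hX : Measurable X) (hT : Measurable T)
    (hTval : ∀ ω, T ω = 0 ∨ T ω = 1)
    -- fixed treatment level `t ∈ {0,1}` and the potential outcome `Y(t)`
    (t : ℝ) (ht : t = 0 ∨ t = 1)
    (Yt : Ω → ℝ) (hYtm : Measurable Yt)
    -- tilting function and sensitivity parameter
    (s : ℝ → ℝ) (hs : Measurable s) (γ : ℝ)
    -- versions of the conditional treatment probabilities given `σ(X)`
    (πt πs : (Fin p → ℝ) → ℝ) (hπt : Measurable πt) (hπs : Measurable πs)
    (hπtv : (fun ω => πt (X ω)) =ᵐ[P]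
      P[(fun ω => if T ω = t then (1 : ℝ) else 0) | MeasurableSpace.comap X inferInstance])
    (hπsv : (fun ω => πs (X ω)) =ᵐ[P]
      P[(fun ω => if T ω = 1 - t then (1 : ℝ) else 0) | MeasurableSpace.comap X inferInstance])
    -- positivity
    (ε : ℝ) (hε : 0 < ε)
    (hpos : ∀ᵐ ω ∂P, ε ≤ πt (X ω) ∧ πt (X ω) ≤ 1 - ε)
    -- integrability of the exponential tilt
    (hExpInt : Integrable (fun ω => Real.exp (γ * s (Yt ω))) P)
    -- `C_t(X)`, a version of `E[e^{γ_t s_t(Y(t))}1{T=t}|σ(X)]/π_t(X)`, with `0 < C_t(X)` a.s.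
    (Ct : (Fin p → ℝ) → ℝ) (hCt : Measurable Ct)
    (hCtv : (fun ω => Ct (X ω)) =ᵐ[P] fun ω =>
      (P[(fun ω => Real.exp (γ * s (Yt ω)) * (if T ω = t then (1 : ℝ) else 0)) |
        MeasurableSpace.comap X inferInstance]) ω / πt (X ω))
    (hCpos : ∀ᵐ ω ∂P, 0 < Ct (X ω))
    -- tilting assumption at level `t` (for every bounded measurable `g`)
    (htilt : ∀ g : ℝ → ℝ, Measurable g → (∃ C, ∀ y, |g y| ≤ C) →
      ∀ᵐ ω ∂P,
        (P[(fun ω => g (Yt ω) * (if T ω = 1 - t then (1 : ℝ) else 0)) |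
          MeasurableSpace.comap X inferInstance]) ω *
        (P[(fun ω => Real.exp (γ * s (Yt ω)) * (if T ω = t then (1 : ℝ) else 0)) |
          MeasurableSpace.comap X inferInstance]) ω =
        (P[(fun ω => g (Yt ω) * Real.exp (γ * s (Yt ω)) * (if T ω = t then (1 : ℝ) else 0)) |
          MeasurableSpace.comap X inferInstance]) ω *
        (P[(fun ω => if T ω = 1 - t then (1 : ℝ) else 0) |
          MeasurableSpace.comap X inferInstance]) ω) :
    (P[(fun ω => if T ω = 1 - t then (1 : ℝ) else 0) |
        MeasurableSpace.comap (fun ω => (X ω, Yt ω)) inferInstance]) =ᵐ[P]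
      fun ω =>
        Real.exp (Real.log (πs (X ω) / (1 - πs (X ω))) - Real.log (Ct (X ω)) + γ * s (Yt ω)) /
          (1 + Real.exp (Real.log (πs (X ω) / (1 - πs (X ω))) - Real.log (Ct (X ω))
            + γ * s (Yt ω))) :=
  sensitivity_logistic_representation_general P X T hX hT hTval t ht Yt hYtm s hs γ πt πs hπtv hπsv
    ε hε hpos hExpInt Ct hCtv hCpos htilt
end

section
/- The efficient influence function has mean zero under the true distribution: E[ φ_t(P)(X,T,Y) ] = 0; equivalently, E[ ν_t(P)(X,T,Y) ] = ψ_t(P). -/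
/-!
Write `ν_t` as `Y 1{T=t}`, plus the two tilting terms, plus `1{T=1-t} μ_Y/μ₁`, and integrate
each against the tower property over `σ(X)`. The tilting terms cancel because
`E[Y e^{γ s(Y)} 1{T=t} | X] = (μ_Y/μ₁)(X) · E[e^{γ s(Y)} 1{T=t} | X]`. The weight
`π_{1-t} μ_Y / (π_t μ₁²)` of the second tilting term need not be bounded, but it multiplies the
nonnegative variable `W = e^{γ s(Y)} 1{T=t}`, and the tower property holds for nonnegative `W`
and arbitrary `σ(X)`-measurable weights: the measures `W · P` and `E[W | X] · P` agree on `σ(X)`.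
-/

open MeasureTheory Real

section

variable {Ω : Type*} {m m₀ : MeasurableSpace Ω} {μ : Measure Ω}

theorem ae_eq_mul_of_ae_eq_div {f h p : Ω → ℝ} (hf : f =ᵐ[μ] fun ω => h ω / p ω)
    (hp : ∀ᵐ ω ∂μ, 0 < p ω) : h =ᵐ[μ] fun ω => f ω * p ω := by
  filter_upwards [hf, hp] with ω hfω hpω
  rw [hfω, div_mul_cancel₀ _ hpω.ne']

theorem MeasureTheory.Integrable.div_of_le {f g : Ω → ℝ} {ε : ℝ} (hf : Integrable f μ)
    (hg : AEStronglyMeasurable g μ) (hε : 0 < ε) (hεg : ∀ᵐ ω ∂μ, ε ≤ g ω) :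
    Integrable (fun ω => f ω / g ω) μ := by
  simp_rw [div_eq_mul_inv]
  refine hf.mul_bdd hg.aemeasurable.inv.aestronglyMeasurable (c := ε⁻¹) ?_
  filter_upwards [hεg] with ω hω
  rw [norm_inv, Real.norm_of_nonneg (hε.le.trans hω)]
  exact inv_anti₀ hε hω

theorem integral_mul_condExp_of_integrable (hm : m ≤ m₀) [SigmaFinite (μ.trim hm)]
    {g W : Ω → ℝ} (hg : StronglyMeasurable[m] g) (hWg : Integrable (fun ω => W ω * g ω) μ)
    (hW : Integrable W μ) :
    ∫ ω, W ω * g ω ∂μ = ∫ ω, μ[W|m] ω * g ω ∂μ := by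
  rw [← integral_condExp hm]
  exact integral_congr_ae (condExp_mul_of_stronglyMeasurable_right hg hWg hW)

theorem integral_withDensity_ofReal {W : Ω → ℝ} (hW : AEMeasurable W μ) (hW0 : 0 ≤ᵐ[μ] W)
    (g : Ω → ℝ) :
    ∫ ω, g ω ∂μ.withDensity (fun ω => ENNReal.ofReal (W ω)) = ∫ ω, W ω * g ω ∂μ := by
  rw [integral_withDensity_eq_integral_toReal_smul₀ hW.ennreal_ofReal
    (ae_of_all _ fun _ => ENNReal.ofReal_lt_top)]
  refine integral_congr_ae ?_
  filter_upwards [hW0] with ω hω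
  simp [ENNReal.toReal_ofReal hω]

theorem integrable_withDensity_ofReal_iff {W : Ω → ℝ} (hW : AEMeasurable W μ)
    (hW0 : 0 ≤ᵐ[μ] W) {g : Ω → ℝ} :
    Integrable g (μ.withDensity fun ω => ENNReal.ofReal (W ω)) ↔
      Integrable (fun ω => W ω * g ω) μ := by
  rw [integrable_withDensity_iff_integrable_smul₀' hW.ennreal_ofReal
    (ae_of_all _ fun _ => ENNReal.ofReal_lt_top)]
  refine integrable_congr ?_
  filter_upwards [hW0] with ω hω
  simp [ENNReal.toReal_ofReal hω]

theorem trim_withDensity_ofReal_condExp (hm : m ≤ m₀) [SigmaFinite (μ.trim hm)] {W : Ω → ℝ}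
    (hW : Integrable W μ) (hW0 : 0 ≤ᵐ[μ] W) :
    (μ.withDensity fun ω => ENNReal.ofReal (μ[W|m] ω)).trim hm =
      (μ.withDensity fun ω => ENNReal.ofReal (W ω)).trim hm := by
  refine @Measure.ext _ m _ _ fun s hs => ?_
  rw [trim_measurableSet_eq hm hs, trim_measurableSet_eq hm hs,
    withDensity_apply _ (hm s hs), withDensity_apply _ (hm s hs),
    ← ofReal_integral_eq_lintegral_ofReal integrable_condExp.integrableOn
      (ae_restrict_of_ae (condExp_nonneg hW0)),
    ← ofReal_integral_eq_lintegral_ofReal hW.integrableOn (ae_restrict_of_ae hW0),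
    setIntegral_condExp hm hW hs]

theorem integrable_mul_condExp_iff_of_nonneg (hm : m ≤ m₀) [SigmaFinite (μ.trim hm)]
    {g W : Ω → ℝ} (hg : StronglyMeasurable[m] g) (hW : Integrable W μ) (hW0 : 0 ≤ᵐ[μ] W) :
    Integrable (fun ω => μ[W|m] ω * g ω) μ ↔ Integrable (fun ω => W ω * g ω) μ := by
  rw [← integrable_withDensity_ofReal_iff hW.aemeasurable hW0,
    ← integrable_withDensity_ofReal_iff integrable_condExp.aemeasurable (condExp_nonneg hW0)]
  have htrim := trim_withDensity_ofReal_condExp hm hW hW0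
  exact ⟨fun h => integrable_of_integrable_trim hm (htrim ▸ h.trim hm hg),
    fun h => integrable_of_integrable_trim hm (htrim.symm ▸ h.trim hm hg)⟩

theorem integral_mul_condExp_of_nonneg (hm : m ≤ m₀) [SigmaFinite (μ.trim hm)]
    {g W : Ω → ℝ} (hg : StronglyMeasurable[m] g) (hW : Integrable W μ) (hW0 : 0 ≤ᵐ[μ] W) :
    ∫ ω, W ω * g ω ∂μ = ∫ ω, μ[W|m] ω * g ω ∂μ := by
  rw [← integral_withDensity_ofReal hW.aemeasurable hW0,
    ← integral_withDensity_ofReal integrable_condExp.aemeasurable (condExp_nonneg hW0),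
    integral_trim hm hg, integral_trim hm hg, trim_withDensity_ofReal_condExp hm hW hW0]

theorem integral_mul_eq_integral_mul_mul_of_condExp_eq (hm : m ≤ m₀) [SigmaFinite (μ.trim hm)]
    {B C q r : Ω → ℝ} {c : ℝ} (hq : StronglyMeasurable[m] q) (hq_bdd : ∀ᵐ ω ∂μ, ‖q ω‖ ≤ c)
    (hr : StronglyMeasurable[m] r) (hB : Integrable B μ) (hB0 : 0 ≤ᵐ[μ] B)
    (hC : Integrable C μ) (hCB : μ[C|m] =ᵐ[μ] fun ω => r ω * μ[B|m] ω) :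
    Integrable (fun ω => B ω * (r ω * q ω)) μ ∧
      ∫ ω, C ω * q ω ∂μ = ∫ ω, B ω * (r ω * q ω) ∂μ := by
  have hrq : StronglyMeasurable[m] fun ω => r ω * q ω := hr.mul hq
  have hcond : (fun ω => μ[C|m] ω * q ω) =ᵐ[μ] fun ω => μ[B|m] ω * (r ω * q ω) := by
    filter_upwards [hCB] with ω hω
    rw [hω, mul_comm (r ω), mul_assoc]
  have hCq : Integrable (fun ω => μ[C|m] ω * q ω) μ :=
    integrable_condExp.mul_bdd (hq.mono hm).aestronglyMeasurable hq_bdd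
  refine ⟨(integrable_mul_condExp_iff_of_nonneg hm hrq hB hB0).1 (hCq.congr hcond), ?_⟩
  rw [integral_mul_condExp_of_integrable hm hq
      (hC.mul_bdd (hq.mono hm).aestronglyMeasurable hq_bdd) hC,
    integral_congr_ae hcond, integral_mul_condExp_of_nonneg hm hrq hB hB0]

theorem integral_tilt_correction_eq_zero (hm : m ≤ m₀) [SigmaFinite (μ.trim hm)]
    {I Y E pt ps mE mYE : Ω → ℝ} {ε : ℝ} (hε : 0 < ε)
    (hEI : Integrable (fun ω => E ω * I ω) μ) (hEI0 : 0 ≤ᵐ[μ] fun ω => E ω * I ω)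
    (hYEI : Integrable (fun ω => Y ω * E ω * I ω) μ)
    (hpt : StronglyMeasurable[m] pt) (hps : StronglyMeasurable[m] ps)
    (hmE : StronglyMeasurable[m] mE) (hmYE : StronglyMeasurable[m] mYE)
    (hps1 : ∀ᵐ ω ∂μ, ‖ps ω‖ ≤ 1)
    (hmE_eq : mE =ᵐ[μ] fun ω => μ[fun ω => E ω * I ω|m] ω / pt ω)
    (hmYE_eq : mYE =ᵐ[μ] fun ω => μ[fun ω => Y ω * E ω * I ω|m] ω / pt ω)
    (hpt_ge : ∀ᵐ ω ∂μ, ε ≤ pt ω) (hmE_ge : ∀ᵐ ω ∂μ, ε ≤ mE ω) :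
    Integrable (fun ω => Y ω * E ω * I ω * (ps ω / (pt ω * mE ω))
        - E ω * I ω * (mYE ω / mE ω * (ps ω / (pt ω * mE ω)))) μ ∧
      ∫ ω, (Y ω * E ω * I ω * (ps ω / (pt ω * mE ω))
        - E ω * I ω * (mYE ω / mE ω * (ps ω / (pt ω * mE ω)))) ∂μ = 0 := by
  have hpt0 : ∀ᵐ ω ∂μ, 0 < pt ω := hpt_ge.mono fun ω h => hε.trans_le h
  have hq_bdd : ∀ᵐ ω ∂μ, ‖ps ω / (pt ω * mE ω)‖ ≤ 1 / (ε * ε) := by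
    filter_upwards [hps1, hpt_ge, hmE_ge] with ω hps hpt hmE
    rw [norm_div, Real.norm_of_nonneg (mul_pos (hε.trans_le hpt) (hε.trans_le hmE)).le]
    exact div_le_div₀ zero_le_one hps (mul_pos hε hε) (mul_le_mul hpt hmE hε.le (hε.le.trans hpt))
  have hCB : μ[fun ω => Y ω * E ω * I ω|m] =ᵐ[μ]
      fun ω => mYE ω / mE ω * μ[fun ω => E ω * I ω|m] ω := by
    filter_upwards [ae_eq_mul_of_ae_eq_div hmYE_eq hpt0, ae_eq_mul_of_ae_eq_div hmE_eq hpt0,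
      hmE_ge] with ω hC hB hmE
    rw [hC, hB]
    field_simp [(hε.trans_le hmE).ne']
  have hq : StronglyMeasurable[m] fun ω => ps ω / (pt ω * mE ω) := hps.div (hpt.mul hmE)
  have hr : StronglyMeasurable[m] fun ω => mYE ω / mE ω := hmYE.div hmE
  obtain ⟨hBrq, hCq_eq⟩ := integral_mul_eq_integral_mul_mul_of_condExp_eq hm hq hq_bdd
    hr hEI hEI0 hYEI hCB
  have hCq : Integrable (fun ω => Y ω * E ω * I ω * (ps ω / (pt ω * mE ω))) μ :=
    hYEI.mul_bdd (hq.mono hm).aestronglyMeasurable hq_bdd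
  exact ⟨hCq.sub hBrq, by rw [integral_sub hCq hBrq, hCq_eq, sub_self]⟩

theorem integral_uncentered_eif_eq_target (hm : m ≤ m₀) [IsFiniteMeasure μ]
    {I J Y E pt ps mY mE mYE : Ω → ℝ} {ε : ℝ} (hε : 0 < ε)
    (hYI : Integrable (fun ω => Y ω * I ω) μ) (hEI : Integrable (fun ω => E ω * I ω) μ)
    (hEI0 : 0 ≤ᵐ[μ] fun ω => E ω * I ω) (hYEI : Integrable (fun ω => Y ω * E ω * I ω) μ)
    (hJ : AEStronglyMeasurable J μ) (hJ1 : ∀ᵐ ω ∂μ, |J ω| ≤ 1)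
    (hpt : StronglyMeasurable[m] pt) (hps : StronglyMeasurable[m] ps)
    (hmE : StronglyMeasurable[m] mE) (hmYE : StronglyMeasurable[m] mYE)
    (hps_eq : ps =ᵐ[μ] μ[J|m])
    (hmY_eq : mY =ᵐ[μ] fun ω => μ[fun ω => Y ω * I ω|m] ω / pt ω)
    (hmE_eq : mE =ᵐ[μ] fun ω => μ[fun ω => E ω * I ω|m] ω / pt ω)
    (hmYE_eq : mYE =ᵐ[μ] fun ω => μ[fun ω => Y ω * E ω * I ω|m] ω / pt ω)
    (hpt_ge : ∀ᵐ ω ∂μ, ε ≤ pt ω) (hmE_ge : ∀ᵐ ω ∂μ, ε ≤ mE ω) :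
    ∫ ω, (I ω * (Y ω + Y ω * E ω * ps ω / (pt ω * mE ω)
            - E ω * ps ω * mYE ω / (pt ω * mE ω ^ 2)) + J ω * (mYE ω / mE ω)) ∂μ =
      ∫ ω, (mY ω * pt ω + (mYE ω / mE ω) * ps ω) ∂μ := by
  have hpt0 : ∀ᵐ ω ∂μ, 0 < pt ω := hpt_ge.mono fun ω h => hε.trans_le h
  have hps1 : ∀ᵐ ω ∂μ, ‖ps ω‖ ≤ 1 := by
    filter_upwards [hps_eq, ae_bdd_abs_condExp_of_ae_bdd_abs (m := m) hJ1] with ω hω hbdd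
    rwa [Real.norm_eq_abs, hω]
  obtain ⟨hcorr, hcorr_eq⟩ := integral_tilt_correction_eq_zero hm hε hEI hEI0 hYEI hpt hps hmE
    hmYE hps1 hmE_eq hmYE_eq hpt_ge hmE_ge
  have hr : Integrable (fun ω => mYE ω / mE ω) μ :=
    ((Integrable.div_of_le integrable_condExp (hpt.mono hm).aestronglyMeasurable hε
      hpt_ge).congr hmYE_eq.symm).div_of_le (hmE.mono hm).aestronglyMeasurable hε hmE_ge
  have hJr : Integrable (fun ω => J ω * (mYE ω / mE ω)) μ := hr.bdd_mul hJ hJ1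
  have hYI_eq : ∫ ω, Y ω * I ω ∂μ = ∫ ω, mY ω * pt ω ∂μ :=
    (integral_condExp hm).symm.trans (integral_congr_ae (ae_eq_mul_of_ae_eq_div hmY_eq hpt0))
  have hJr_eq : ∫ ω, J ω * (mYE ω / mE ω) ∂μ = ∫ ω, mYE ω / mE ω * ps ω ∂μ := by
    have hr_meas : StronglyMeasurable[m] fun ω => mYE ω / mE ω := hmYE.div hmE
    rw [integral_mul_condExp_of_integrable hm hr_meas hJr (.of_bound hJ 1 hJ1)]
    refine integral_congr_ae ?_
    filter_upwards [hps_eq] with ω hω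
    rw [← hω, mul_comm]
  calc _ = ∫ ω, (Y ω * I ω + (Y ω * E ω * I ω * (ps ω / (pt ω * mE ω))
          - E ω * I ω * (mYE ω / mE ω * (ps ω / (pt ω * mE ω)))) + J ω * (mYE ω / mE ω)) ∂μ := by
        congr 1
        funext ω
        ring
    _ = ∫ ω, mY ω * pt ω ∂μ + ∫ ω, mYE ω / mE ω * ps ω ∂μ := by
        have hYI_corr : Integrable (fun ω => Y ω * I ω + (Y ω * E ω * I ω * (ps ω / (pt ω * mE ω))
            - E ω * I ω * (mYE ω / mE ω * (ps ω / (pt ω * mE ω))))) μ := hYI.add hcorr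
        rw [integral_add hYI_corr hJr, integral_add hYI hcorr, hcorr_eq, add_zero,
          hYI_eq, hJr_eq]
    _ = _ := integral_add (integrable_condExp.congr (ae_eq_mul_of_ae_eq_div hmY_eq hpt0))
        (hr.mul_bdd (hps.mono hm).aestronglyMeasurable hps1) |>.symm

end

theorem eif_mean_zero_general
    {Ω : Type*} [MeasurableSpace Ω] (P : Measure Ω) [IsProbabilityMeasure P]
    {p : ℕ} (X : Ω → (Fin p → ℝ)) (T : Ω → ℝ) (Y : Ω → ℝ)
    (hX : Measurable X) (hT : Measurable T)
    -- fixed treatment level `t ∈ {0,1}`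
    (t : ℝ)
    -- tilting function and sensitivity parameter
    (s : ℝ → ℝ) (γ : ℝ)
    -- versions of the conditional treatment probabilities given `σ(X)`
    (πt πs : (Fin p → ℝ) → ℝ) (hπt : Measurable πt) (hπs : Measurable πs)
    (hπsv : (fun ω => πs (X ω)) =ᵐ[P]
      P[(fun ω => if T ω = 1 - t then (1 : ℝ) else 0) | MeasurableSpace.comap X inferInstance])
    -- positivity
    (ε : ℝ) (hε : 0 < ε)
    (hpos : ∀ᵐ ω ∂P, ε ≤ πt (X ω) ∧ πt (X ω) ≤ 1 - ε)
    -- integrability assumptions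
    (hYInt : Integrable Y P)
    (hExpInt : Integrable (fun ω => Real.exp (γ * s (Y ω))) P)
    (hYExpInt : Integrable (fun ω => Y ω * Real.exp (γ * s (Y ω))) P)
    -- versions of the conditional means `μ_t(g(Y); X) = E[g(Y)1{T=t}|σ(X)]/π_t(X)`
    (muY muE muYE : (Fin p → ℝ) → ℝ)
    (hmuEm : Measurable muE) (hmuYEm : Measurable muYE)
    (hmuY : (fun ω => muY (X ω)) =ᵐ[P] fun ω =>
      (P[(fun ω => Y ω * (if T ω = t then (1 : ℝ) else 0)) |
        MeasurableSpace.comap X inferInstance]) ω / πt (X ω))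
    (hmuE : (fun ω => muE (X ω)) =ᵐ[P] fun ω =>
      (P[(fun ω => Real.exp (γ * s (Y ω)) * (if T ω = t then (1 : ℝ) else 0)) |
        MeasurableSpace.comap X inferInstance]) ω / πt (X ω))
    (hmuYE : (fun ω => muYE (X ω)) =ᵐ[P] fun ω =>
      (P[(fun ω => Y ω * Real.exp (γ * s (Y ω)) * (if T ω = t then (1 : ℝ) else 0)) |
        MeasurableSpace.comap X inferInstance]) ω / πt (X ω))
    -- `μ₁(X) ≥ ε` a.s.
    (hmuEpos : ∀ᵐ ω ∂P, ε ≤ muE (X ω)) :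
    -- `E[ν_t(P)(X,T,Y)] = ψ_t(P)`, i.e. the efficient influence function has mean zero
    ∫ ω, ((if T ω = t then (1 : ℝ) else 0) *
          (Y ω + Y ω * Real.exp (γ * s (Y ω)) * πs (X ω) / (πt (X ω) * muE (X ω))
            - Real.exp (γ * s (Y ω)) * πs (X ω) * muYE (X ω) / (πt (X ω) * muE (X ω) ^ 2))
        + (if T ω = 1 - t then (1 : ℝ) else 0) * (muYE (X ω) / muE (X ω))) ∂P =
      ∫ ω, (muY (X ω) * πt (X ω) + (muYE (X ω) / muE (X ω)) * πs (X ω)) ∂P := by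
  have hσX {f : (Fin p → ℝ) → ℝ} (hf : Measurable f) :
      StronglyMeasurable[MeasurableSpace.comap X inferInstance] fun ω => f (X ω) :=
    (hf.comp (comap_measurable X)).stronglyMeasurable
  have hind (c : ℝ) : Measurable fun ω => if T ω = c then (1 : ℝ) else 0 :=
    Measurable.ite (hT (measurableSet_singleton c)) measurable_const measurable_const
  have hind_le (c : ℝ) (ω : Ω) : ‖if T ω = c then (1 : ℝ) else 0‖ ≤ 1 := by
    split_ifs <;> norm_num
  have hmul_ind {W : Ω → ℝ} (hW : Integrable W P) :
      Integrable (fun ω => W ω * if T ω = t then (1 : ℝ) else 0) P :=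
    hW.mul_bdd (hind t).aestronglyMeasurable (ae_of_all _ (hind_le t))
  exact integral_uncentered_eif_eq_target hX.comap_le hε (hmul_ind hYInt) (hmul_ind hExpInt)
    (ae_of_all _ fun ω => mul_nonneg (exp_pos _).le (by split_ifs <;> norm_num))
    (hmul_ind hYExpInt) (hind (1 - t)).aestronglyMeasurable (ae_of_all _ (hind_le (1 - t)))
    (hσX hπt) (hσX hπs) (hσX hmuEm) (hσX hmuYEm) hπsv hmuY hmuE hmuYE
    (hpos.mono fun _ h => h.1) hmuEpos

/-- The efficient influence function has mean zero under the true distribution: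
`E[φ_t(P)(X,T,Y)] = 0`, equivalently `E[ν_t(P)(X,T,Y)] = ψ_t(P)`. -/
theorem eif_mean_zero
    {Ω : Type*} [MeasurableSpace Ω] (P : Measure Ω) [IsProbabilityMeasure P]
    {p : ℕ} (X : Ω → (Fin p → ℝ)) (T : Ω → ℝ) (Y : Ω → ℝ)
    (hX : Measurable X) (hT : Measurable T) (hY : Measurable Y)
    (hTval : ∀ ω, T ω = 0 ∨ T ω = 1)
    -- fixed treatment level `t ∈ {0,1}`
    (t : ℝ) (ht : t = 0 ∨ t = 1)
    -- tilting function and sensitivity parameter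
    (s : ℝ → ℝ) (hs : Measurable s) (γ : ℝ)
    -- versions of the conditional treatment probabilities given `σ(X)`
    (πt πs : (Fin p → ℝ) → ℝ) (hπt : Measurable πt) (hπs : Measurable πs)
    (hπtv : (fun ω => πt (X ω)) =ᵐ[P]
      P[(fun ω => if T ω = t then (1 : ℝ) else 0) | MeasurableSpace.comap X inferInstance])
    (hπsv : (fun ω => πs (X ω)) =ᵐ[P]
      P[(fun ω => if T ω = 1 - t then (1 : ℝ) else 0) | MeasurableSpace.comap X inferInstance])
    -- positivity
    (ε : ℝ) (hε : 0 < ε)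
    (hpos : ∀ᵐ ω ∂P, ε ≤ πt (X ω) ∧ πt (X ω) ≤ 1 - ε)
    -- integrability assumptions
    (hYInt : Integrable Y P)
    (hExpInt : Integrable (fun ω => Real.exp (γ * s (Y ω))) P)
    (hYExpInt : Integrable (fun ω => Y ω * Real.exp (γ * s (Y ω))) P)
    -- versions of the conditional means `μ_t(g(Y); X) = E[g(Y)1{T=t}|σ(X)]/π_t(X)`
    (muY muE muYE : (Fin p → ℝ) → ℝ)
    (hmuYm : Measurable muY) (hmuEm : Measurable muE) (hmuYEm : Measurable muYE)
    (hmuY : (fun ω => muY (X ω)) =ᵐ[P] fun ω =>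
      (P[(fun ω => Y ω * (if T ω = t then (1 : ℝ) else 0)) |
        MeasurableSpace.comap X inferInstance]) ω / πt (X ω))
    (hmuE : (fun ω => muE (X ω)) =ᵐ[P] fun ω =>
      (P[(fun ω => Real.exp (γ * s (Y ω)) * (if T ω = t then (1 : ℝ) else 0)) |
        MeasurableSpace.comap X inferInstance]) ω / πt (X ω))
    (hmuYE : (fun ω => muYE (X ω)) =ᵐ[P] fun ω =>
      (P[(fun ω => Y ω * Real.exp (γ * s (Y ω)) * (if T ω = t then (1 : ℝ) else 0)) |
        MeasurableSpace.comap X inferInstance]) ω / πt (X ω))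
    -- `μ₁(X) ≥ ε` a.s.
    (hmuEpos : ∀ᵐ ω ∂P, ε ≤ muE (X ω)) :
    -- `E[ν_t(P)(X,T,Y)] = ψ_t(P)`, i.e. the efficient influence function has mean zero
    ∫ ω, ((if T ω = t then (1 : ℝ) else 0) *
          (Y ω + Y ω * Real.exp (γ * s (Y ω)) * πs (X ω) / (πt (X ω) * muE (X ω))
            - Real.exp (γ * s (Y ω)) * πs (X ω) * muYE (X ω) / (πt (X ω) * muE (X ω) ^ 2))
        + (if T ω = 1 - t then (1 : ℝ) else 0) * (muYE (X ω) / muE (X ω))) ∂P =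
      ∫ ω, (muY (X ω) * πt (X ω) + (muYE (X ω) / muE (X ω)) * πs (X ω)) ∂P :=
  eif_mean_zero_general P X T Y hX hT t s γ πt πs hπt hπs hπsv ε hε hpos hYInt hExpInt hYExpInt muY
    muE muYE hmuEm hmuYEm hmuY hmuE hmuYE hmuEpos
end

section
/- Derivative along a propensity-score perturbation: define π_{1,δ}(x) := π₁(x) e^{δ l(x)} / ( π₁(x) e^{δ l(x)} + π₀(x) ) and π_{0,δ}(x) := 1 − π_{1,δ}(x), and ψ(δ) := ∫ [ m(x) π_{t,δ}(x) + r(x) π_{1−t,δ}(x) ] dF(x). Then ψ is differentiable at δ = 0 with ψ′(0) = (−1)^{t+1} ∫ ( m(x) − r(x) ) π₁(x) π₀(x) l(x) dF(x). In particular, for each x the map δ ↦ π_{1,δ}(x) has derivative π₁(x) π₀(x) l(x) at δ = 0. -/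
open MeasureTheory Real Set

/-! The tilted propensity `δ ↦ π₁e^{δl}/(π₁e^{δl} + π₀)` is the logistic function of
`δl + logit π₁`, so its `δ`-derivative is `π_{1,δ}(1 - π_{1,δ}) l`, bounded by `sup |l| / 4`.
Hence the `δ`-derivative of the integrand is dominated by `(|m| + |r|) sup |l| / 4` uniformly
in `δ`, and differentiation under the integral sign applies. -/

noncomputable def tiltedPropensity (a b δ : ℝ) : ℝ :=
  a * exp (δ * b) / (a * exp (δ * b) + (1 - a))

section TiltedPropensity

variable {a : ℝ} (b δ : ℝ)

lemma tiltedPropensity_denom_pos (ha : a ∈ Icc (0 : ℝ) 1) :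
    0 < a * exp (δ * b) + (1 - a) := by
  have he := exp_pos (δ * b)
  nlinarith [ha.1, ha.2, mul_nonneg ha.1 he.le, mul_nonneg (sub_nonneg.2 ha.2) he.le]

lemma tiltedPropensity_mem_Icc (ha : a ∈ Icc (0 : ℝ) 1) :
    tiltedPropensity a b δ ∈ Icc (0 : ℝ) 1 := by
  have hd := tiltedPropensity_denom_pos b δ ha
  refine ⟨div_nonneg (mul_nonneg ha.1 (exp_pos _).le) hd.le, (div_le_one hd).2 ?_⟩
  linarith [ha.2]

@[simp]
lemma tiltedPropensity_zero (a b : ℝ) : tiltedPropensity a b 0 = a := by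
  simp [tiltedPropensity]

lemma hasDerivAt_tiltedPropensity (ha : a ∈ Icc (0 : ℝ) 1) :
    HasDerivAt (tiltedPropensity a b)
      (tiltedPropensity a b δ * (1 - tiltedPropensity a b δ) * b) δ := by
  have hd := tiltedPropensity_denom_pos b δ ha
  have hnum : HasDerivAt (fun δ => a * exp (δ * b)) (a * (exp (δ * b) * b)) δ :=
    ((hasDerivAt_mul_const b).exp).const_mul a
  refine (hnum.div (hnum.add_const (1 - a)) hd.ne').congr_deriv ?_
  simp only [tiltedPropensity]
  field_simp

lemma hasDerivAt_tiltedPropensity_zero (ha : a ∈ Icc (0 : ℝ) 1) :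
    HasDerivAt (tiltedPropensity a b) (a * (1 - a) * b) 0 := by
  simpa only [tiltedPropensity_zero] using hasDerivAt_tiltedPropensity b 0 ha

lemma abs_deriv_tiltedPropensity_le (ha : a ∈ Icc (0 : ℝ) 1) {C : ℝ} (hb : |b| ≤ C) :
    |tiltedPropensity a b δ * (1 - tiltedPropensity a b δ) * b| ≤ C / 4 := by
  obtain ⟨h0, h1⟩ := tiltedPropensity_mem_Icc b δ ha
  set g := tiltedPropensity a b δ
  have hvar : |g * (1 - g)| ≤ 1 / 4 := by
    rw [abs_of_nonneg (mul_nonneg h0 (sub_nonneg.2 h1))]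
    nlinarith [sq_nonneg (g - 1 / 2)]
  rw [abs_mul]
  calc |g * (1 - g)| * |b| ≤ 1 / 4 * C := mul_le_mul hvar hb (abs_nonneg b) (by norm_num)
    _ = C / 4 := by ring

end TiltedPropensity

section DerivIntegral

variable {X : Type*} [MeasurableSpace X] {μ : Measure X}

theorem hasDerivAt_integral_mul_add {f g : X → ℝ} (hf : Integrable f μ) (hg : Integrable g μ)
    {G G' : ℝ → X → ℝ} {δ₀ B K : ℝ} (hG_meas : ∀ δ, AEStronglyMeasurable (G δ) μ)
    (hG_bdd : ∀ᵐ x ∂μ, ‖G δ₀ x‖ ≤ B) (hG'_meas : AEStronglyMeasurable (G' δ₀) μ)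
    (hG' : ∀ δ x, HasDerivAt (G · x) (G' δ x) δ) (hG'_bdd : ∀ δ x, ‖G' δ x‖ ≤ K) :
    HasDerivAt (fun δ => ∫ x, f x * G δ x + g x ∂μ) (∫ x, f x * G' δ₀ x ∂μ) δ₀ := by
  have hF_meas : ∀ δ, AEStronglyMeasurable (fun x => f x * G δ x + g x) μ := fun δ =>
    (hf.aestronglyMeasurable.mul (hG_meas δ)).add hg.aestronglyMeasurable
  refine (hasDerivAt_integral_of_dominated_loc_of_deriv_le (F' := fun δ x => f x * G' δ x)
    (bound := fun x => ‖f x‖ * K) Filter.univ_mem (.of_forall hF_meas)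
    ((hf.mul_bdd (hG_meas δ₀) hG_bdd).add hg) (hf.aestronglyMeasurable.mul hG'_meas)
    (ae_of_all _ fun x δ _ => ?_) (hf.norm.mul_const K) (ae_of_all _ fun x δ _ => ?_)).2
  · rw [norm_mul]
    exact mul_le_mul_of_nonneg_left (hG'_bdd δ x) (norm_nonneg _)
  · exact ((hG' δ x).const_mul (f x)).add_const (g x)

lemma hasDerivAt_integral_tiltedPropensity {π1 l f g : X → ℝ} (hπ1 : Measurable π1) (hπ1_mem : ∀ x, π1 x ∈ Icc (0 : ℝ) 1)
    (hl : Measurable l) {C : ℝ} (hl_bdd : ∀ x, |l x| ≤ C)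
    (hf : Integrable f μ) (hg : Integrable g μ) :
    HasDerivAt (fun δ => ∫ x, f x * tiltedPropensity (π1 x) (l x) δ + g x ∂μ)
      (∫ x, f x * π1 x * (1 - π1 x) * l x ∂μ) 0 := by
  have hG_meas : ∀ δ, Measurable fun x => tiltedPropensity (π1 x) (l x) δ := fun δ => by
    unfold tiltedPropensity
    fun_prop
  have hG_bdd : ∀ x, ‖tiltedPropensity (π1 x) (l x) 0‖ ≤ 1 := fun x => by
    obtain ⟨h0, h1⟩ := tiltedPropensity_mem_Icc (l x) 0 (hπ1_mem x)
    rw [norm_eq_abs, abs_le]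
    constructor <;> linarith
  have h := hasDerivAt_integral_mul_add (δ₀ := 0) hf hg
    (fun δ => (hG_meas δ).aestronglyMeasurable) (ae_of_all _ hG_bdd)
    (G' := fun δ x => tiltedPropensity (π1 x) (l x) δ *
      (1 - tiltedPropensity (π1 x) (l x) δ) * l x)
    (((hG_meas 0).mul (measurable_const.sub (hG_meas 0))).mul hl).aestronglyMeasurable
    (fun δ x => hasDerivAt_tiltedPropensity (l x) δ (hπ1_mem x))
    (fun δ x => abs_deriv_tiltedPropensity_le (l x) δ (hπ1_mem x) (hl_bdd x))
  simpa only [tiltedPropensity_zero, mul_assoc] using h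

end DerivIntegral

theorem propensity_perturbation_derivative_general
    {p : ℕ} (F : Measure (Fin p → ℝ))
    (t : ℕ) (ht : t = 0 ∨ t = 1)
    (π1 : (Fin p → ℝ) → ℝ) (hπ1 : Measurable π1) (hπ1mem : ∀ x, π1 x ∈ Set.Ioo (0 : ℝ) 1)
    (l : (Fin p → ℝ) → ℝ) (hl : Measurable l) (hl_bdd : ∃ C, ∀ x, |l x| ≤ C)
    (m r : (Fin p → ℝ) → ℝ)
    (hm_int : Integrable m F) (hr_int : Integrable r F) :
    HasDerivAt
      (fun δ : ℝ => ∫ x,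
        (m x * (if t = 1 then
            π1 x * Real.exp (δ * l x) / (π1 x * Real.exp (δ * l x) + (1 - π1 x))
          else
            1 - π1 x * Real.exp (δ * l x) / (π1 x * Real.exp (δ * l x) + (1 - π1 x))) +
         r x * (if t = 1 then
            1 - π1 x * Real.exp (δ * l x) / (π1 x * Real.exp (δ * l x) + (1 - π1 x))
          else
            π1 x * Real.exp (δ * l x) / (π1 x * Real.exp (δ * l x) + (1 - π1 x)))) ∂F)
      ((-1 : ℝ) ^ (t + 1) * ∫ x, (m x - r x) * π1 x * (1 - π1 x) * l x ∂F)
      0 ∧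
    ∀ x, HasDerivAt
      (fun δ : ℝ => π1 x * Real.exp (δ * l x) / (π1 x * Real.exp (δ * l x) + (1 - π1 x)))
      (π1 x * (1 - π1 x) * l x) 0 := by
  have hπ1_mem x : π1 x ∈ Icc (0 : ℝ) 1 := Ioo_subset_Icc_self (hπ1mem x)
  refine ⟨?_, fun x => hasDerivAt_tiltedPropensity_zero (l x) (hπ1_mem x)⟩
  obtain ⟨C, hC⟩ := hl_bdd
  rcases ht with rfl | rfl
  · convert hasDerivAt_integral_tiltedPropensity hπ1 hπ1_mem hl hC (hr_int.sub hm_int) hm_int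
      using 1
    · ext δ
      refine integral_congr_ae (ae_of_all _ fun x => ?_)
      simp only [tiltedPropensity, zero_ne_one, ↓reduceIte, Pi.sub_apply]
      ring
    · rw [zero_add, pow_one, neg_one_mul, ← integral_neg]
      exact integral_congr_ae (ae_of_all _ fun x => by simp only [Pi.sub_apply]; ring)
  · convert hasDerivAt_integral_tiltedPropensity hπ1 hπ1_mem hl hC (hm_int.sub hr_int) hr_int
      using 1
    · ext δ
      refine integral_congr_ae (ae_of_all _ fun x => ?_)
      simp only [tiltedPropensity, ↓reduceIte, Pi.sub_apply]
      ring
    · norm_num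

/-- Derivative along a propensity-score perturbation: with
`π_{1,δ}(x) = π₁(x)e^{δl(x)}/(π₁(x)e^{δl(x)} + π₀(x))`, `π_{0,δ} = 1 − π_{1,δ}`, and
`ψ(δ) = ∫ (m·π_{t,δ} + r·π_{1−t,δ}) dF`, the map `ψ` is differentiable at `δ = 0` with
`ψ′(0) = (−1)^{t+1} ∫ (m − r) π₁ π₀ l dF`; and for each `x`, `δ ↦ π_{1,δ}(x)` has derivative
`π₁(x)π₀(x)l(x)` at `δ = 0`. -/
theorem propensity_perturbation_derivative
    {p : ℕ} (F : Measure (Fin p → ℝ)) [IsProbabilityMeasure F]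
    (t : ℕ) (ht : t = 0 ∨ t = 1)
    (π1 : (Fin p → ℝ) → ℝ) (hπ1 : Measurable π1) (hπ1mem : ∀ x, π1 x ∈ Set.Ioo (0 : ℝ) 1)
    (l : (Fin p → ℝ) → ℝ) (hl : Measurable l) (hl_bdd : ∃ C, ∀ x, |l x| ≤ C)
    (m r : (Fin p → ℝ) → ℝ) (hm_meas : Measurable m) (hr_meas : Measurable r)
    (hm_int : Integrable m F) (hr_int : Integrable r F) :
    HasDerivAt
      (fun δ : ℝ => ∫ x,
        (m x * (if t = 1 then
            π1 x * Real.exp (δ * l x) / (π1 x * Real.exp (δ * l x) + (1 - π1 x))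
          else
            1 - π1 x * Real.exp (δ * l x) / (π1 x * Real.exp (δ * l x) + (1 - π1 x))) +
         r x * (if t = 1 then
            1 - π1 x * Real.exp (δ * l x) / (π1 x * Real.exp (δ * l x) + (1 - π1 x))
          else
            π1 x * Real.exp (δ * l x) / (π1 x * Real.exp (δ * l x) + (1 - π1 x)))) ∂F)
      ((-1 : ℝ) ^ (t + 1) * ∫ x, (m x - r x) * π1 x * (1 - π1 x) * l x ∂F)
      0 ∧
    ∀ x, HasDerivAt
      (fun δ : ℝ => π1 x * Real.exp (δ * l x) / (π1 x * Real.exp (δ * l x) + (1 - π1 x)))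
      (π1 x * (1 - π1 x) * l x) 0 :=
  propensity_perturbation_derivative_general F t ht π1 hπ1 hπ1mem l hl hl_bdd m r hm_int hr_int
end

section
/- Riesz-representer identity for the outcome component of the efficient influence function: define b_t(Y,X) := Y + Y e^{γ_t s_t(Y)} π_{1−t}(X)/(π_t(X) μ₁(X)) − e^{γ_t s_t(Y)} μ_Y(X) π_{1−t}(X)/(π_t(X) μ₁(X)²) − μ_t(Y;X). Then for every bounded measurable k : ℝ × ℝ^p → ℝ satisfying E[ k(Y,X) 1{T=t} | σ(X) ] = 0 almost surely, one has E[ 1{T=t} b_t(Y,X) k(Y,X) ] = E[ ( μ_t(Y e^{γ_t s_t(Y)} k(Y,X); X)/μ₁(X) − μ_t(e^{γ_t s_t(Y)} k(Y,X); X) · μ_Y(X)/μ₁(X)² )·π_{1−t}(X) + μ_t(Y k(Y,X); X)·π_t(X) ]. -/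
open MeasureTheory Real

/-!
Everything in the integrand of the left-hand side is a σ(X)-measurable weight times one of
`Y k 1{T=t}`, `Y e^{γs} k 1{T=t}`, `e^{γs} k 1{T=t}`, `k 1{T=t}`, so by the tower property each of
these factors may be replaced by its conditional expectation given `σ(X)`, which is `π_t` times
the corresponding conditional mean `μ_t(·; X)`; the `μ_t(Y;X)`-term drops out because
`E[k 1{T=t} | σ(X)] = 0`.

The only delicate point is integrability of the correction term
`μ_Y π_{1-t} / (π_t μ₁²) · e^{γs} k 1{T=t}`, whose weight is unbounded. Since the weight is
σ(X)-measurable, this can be checked after conditioning (an identity of lower Lebesgue integrals),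
where `E[e^{γs} 1{T=t} | σ(X)] = π_t μ₁` cancels the denominator and leaves a multiple of the
integrable `μ_Y(X)`.
-/

namespace MeasureTheory

variable {Ω : Type*} {m m₀ : MeasurableSpace Ω} {μ : Measure[m₀] Ω}

theorem lintegral_mul_condLExp (hm : m ≤ m₀) [SigmaFinite (μ.trim hm)] {f g : Ω → ENNReal}
    (hf : Measurable[m] f) (hg : AEMeasurable g μ) :
    ∫⁻ ω, f ω * μ⁻[g|m] ω ∂μ = ∫⁻ ω, f ω * g ω ∂μ := by
  have htrim : (μ.withDensity μ⁻[g|m]).trim hm = (μ.withDensity g).trim hm := by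
    refine @Measure.ext _ m _ _ fun s hs => ?_
    rw [trim_measurableSet_eq hm hs, trim_measurableSet_eq hm hs, withDensity_apply _ (hm s hs),
      withDensity_apply _ (hm s hs), setLIntegral_condLExp hm _ _ hs]
  calc ∫⁻ ω, f ω * μ⁻[g|m] ω ∂μ = ∫⁻ ω, f ω ∂(μ.withDensity μ⁻[g|m]).trim hm := by
        rw [lintegral_trim hm hf, lintegral_withDensity_eq_lintegral_mul _
          (measurable_condLExp' _ _ _) (hf.mono hm le_rfl)]
        simp_rw [Pi.mul_apply, mul_comm]
    _ = ∫⁻ ω, f ω * g ω ∂μ := by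
        rw [htrim, lintegral_trim hm hf, lintegral_withDensity_eq_lintegral_mul₀ hg
          (hf.mono hm le_rfl).aemeasurable]
        simp_rw [Pi.mul_apply, mul_comm]

theorem lintegral_enorm_mul_condExp (hm : m ≤ m₀) [SigmaFinite (μ.trim hm)] {w h : Ω → ℝ}
    (hw : StronglyMeasurable[m] w) (hh : Integrable h μ) (hh₀ : 0 ≤ᵐ[μ] h) :
    ∫⁻ ω, ‖w ω * μ[h|m] ω‖ₑ ∂μ = ∫⁻ ω, ‖w ω * h ω‖ₑ ∂μ := by
  simp_rw [enorm_mul]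
  rw [← lintegral_mul_condLExp hm (@StronglyMeasurable.enorm _ m _ _ _ _ hw) hh.1.enorm]
  refine lintegral_congr_ae ?_
  filter_upwards [condLExp_enorm m hh hh₀] with ω hω
  rw [hω]

theorem integrable_mul_of_norm_le_of_integrable_mul_condExp (hm : m ≤ m₀)
    [SigmaFinite (μ.trim hm)] {w g h : Ω → ℝ} {C : ℝ} (hw : StronglyMeasurable[m] w)
    (hg : AEStronglyMeasurable g μ) (hh : Integrable h μ) (hh₀ : 0 ≤ᵐ[μ] h)
    (hgh : ∀ᵐ ω ∂μ, ‖g ω‖ ≤ C * h ω) (hwh : Integrable (fun ω => w ω * μ[h|m] ω) μ) :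
    Integrable (fun ω => w ω * g ω) μ := by
  have hw' : AEStronglyMeasurable w μ := (hw.mono hm).aestronglyMeasurable
  have hwh' : Integrable (fun ω => w ω * h ω) μ := by
    refine ⟨hw'.mul hh.1, ?_⟩
    rw [HasFiniteIntegral, ← lintegral_enorm_mul_condExp hm hw hh hh₀]
    exact hwh.2
  refine (hwh'.norm.const_mul C).mono' (hw'.mul hg) ?_
  filter_upwards [hgh, hh₀] with ω hgω hhω
  rw [norm_mul, norm_mul, Real.norm_of_nonneg hhω, mul_left_comm]
  exact mul_le_mul_of_nonneg_left hgω (norm_nonneg _)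

theorem integral_sum_mul_eq_integral_sum_mul_condExp (hm : m ≤ m₀) [SigmaFinite (μ.trim hm)]
    {ι : Type*} (s : Finset ι) {w g : ι → Ω → ℝ} (hw : ∀ i ∈ s, StronglyMeasurable[m] (w i))
    (hg : ∀ i ∈ s, Integrable (g i) μ) (hwg : ∀ i ∈ s, Integrable (w i * g i) μ) :
    ∫ ω, (∑ i ∈ s, w i * g i) ω ∂μ = ∫ ω, (∑ i ∈ s, w i * μ[g i|m]) ω ∂μ := by
  rw [← integral_condExp hm]
  refine integral_congr_ae ?_
  filter_upwards [condExp_finsetSum hwg m, (Filter.eventually_all_finset s).2 fun i hi =>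
    condExp_mul_of_stronglyMeasurable_left (m := m) (hw i hi) (hwg i hi) (hg i hi)] with ω h1 h2
  rw [h1, Finset.sum_apply, Finset.sum_apply]
  exact Finset.sum_congr rfl h2

theorem Integrable.div_of_ae_le {g q : Ω → ℝ} {ε : ℝ} (hg : Integrable g μ)
    (hq : AEMeasurable q μ) (hε : 0 < ε) (hqε : ∀ᵐ ω ∂μ, ε ≤ q ω) :
    Integrable (fun ω => g ω / q ω) μ := by
  simp only [div_eq_mul_inv]
  refine hg.mul_bdd (c := ε⁻¹) hq.inv.aestronglyMeasurable ?_
  filter_upwards [hqε] with ω hω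
  rw [norm_inv, Real.norm_of_nonneg (hε.le.trans hω)]
  exact inv_anti₀ hε hω

end MeasureTheory

theorem abs_div_le_inv_of_abs_le_one {a b ε : ℝ} (hε : 0 < ε) (ha : |a| ≤ 1) (hb : ε ≤ b) :
    |a / b| ≤ ε⁻¹ := by
  rw [abs_div, abs_of_pos (hε.trans_le hb), ← one_div]
  exact div_le_div₀ zero_le_one ha hε hb

theorem riesz_representer_identity_general
    {Ω : Type*} [MeasurableSpace Ω] (P : Measure Ω) [IsProbabilityMeasure P]
    {p : ℕ} (X : Ω → (Fin p → ℝ)) (T : Ω → ℝ) (Y : Ω → ℝ)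
    (hX : Measurable X) (hT : Measurable T) (hY : Measurable Y)
    (t : ℝ)
    (s : ℝ → ℝ) (γ : ℝ)
    -- versions of the conditional treatment probabilities given `σ(X)`
    (πt πs : (Fin p → ℝ) → ℝ) (hπt : Measurable πt) (hπs : Measurable πs)
    (hπsv : (fun ω => πs (X ω)) =ᵐ[P]
      P[(fun ω => if T ω = 1 - t then (1 : ℝ) else 0) | MeasurableSpace.comap X inferInstance])
    -- positivity
    (ε : ℝ) (hε : 0 < ε)
    (hpos : ∀ᵐ ω ∂P, ε ≤ πt (X ω) ∧ πt (X ω) ≤ 1 - ε)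
    -- integrability assumptions
    (hYInt : Integrable Y P)
    (hExpInt : Integrable (fun ω => Real.exp (γ * s (Y ω))) P)
    (hYExpInt : Integrable (fun ω => Y ω * Real.exp (γ * s (Y ω))) P)
    -- versions of the conditional means `μ_t(Y;X)`, `μ₁(X) := μ_t(e^{γs(Y)};X)`,
    -- `μ_Y(X) := μ_t(Ye^{γs(Y)};X)`
    (muY muE muYE : (Fin p → ℝ) → ℝ)
    (hmuYm : Measurable muY) (hmuEm : Measurable muE) (hmuYEm : Measurable muYE)
    (hmuY : (fun ω => muY (X ω)) =ᵐ[P] fun ω =>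
      (P[(fun ω => Y ω * (if T ω = t then (1 : ℝ) else 0)) |
        MeasurableSpace.comap X inferInstance]) ω / πt (X ω))
    (hmuE : (fun ω => muE (X ω)) =ᵐ[P] fun ω =>
      (P[(fun ω => Real.exp (γ * s (Y ω)) * (if T ω = t then (1 : ℝ) else 0)) |
        MeasurableSpace.comap X inferInstance]) ω / πt (X ω))
    (hmuYE : (fun ω => muYE (X ω)) =ᵐ[P] fun ω =>
      (P[(fun ω => Y ω * Real.exp (γ * s (Y ω)) * (if T ω = t then (1 : ℝ) else 0)) |
        MeasurableSpace.comap X inferInstance]) ω / πt (X ω))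
    (hmuEpos : ∀ᵐ ω ∂P, ε ≤ muE (X ω)) :
    -- the identity, for every admissible `k` and versions `A`, `B`, `C` of the conditional
    -- means `μ_t(Ye^{γs(Y)}k(Y,X);X)`, `μ_t(e^{γs(Y)}k(Y,X);X)`, `μ_t(Yk(Y,X);X)`
    ∀ k : ℝ → (Fin p → ℝ) → ℝ,
      Measurable (fun q : ℝ × (Fin p → ℝ) => k q.1 q.2) →
      (∃ C, ∀ y x, |k y x| ≤ C) →
      ((P[(fun ω => k (Y ω) (X ω) * (if T ω = t then (1 : ℝ) else 0)) |
          MeasurableSpace.comap X inferInstance]) =ᵐ[P] 0) →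
      ∀ A B C : (Fin p → ℝ) → ℝ,
        ((fun ω => A (X ω)) =ᵐ[P] fun ω =>
          (P[(fun ω => Y ω * Real.exp (γ * s (Y ω)) * k (Y ω) (X ω) *
              (if T ω = t then (1 : ℝ) else 0)) |
            MeasurableSpace.comap X inferInstance]) ω / πt (X ω)) →
        ((fun ω => B (X ω)) =ᵐ[P] fun ω =>
          (P[(fun ω => Real.exp (γ * s (Y ω)) * k (Y ω) (X ω) *
              (if T ω = t then (1 : ℝ) else 0)) |
            MeasurableSpace.comap X inferInstance]) ω / πt (X ω)) →
        ((fun ω => C (X ω)) =ᵐ[P] fun ω =>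
          (P[(fun ω => Y ω * k (Y ω) (X ω) * (if T ω = t then (1 : ℝ) else 0)) |
            MeasurableSpace.comap X inferInstance]) ω / πt (X ω)) →
        ∫ ω, (if T ω = t then (1 : ℝ) else 0) *
            (Y ω + Y ω * Real.exp (γ * s (Y ω)) * πs (X ω) / (πt (X ω) * muE (X ω))
              - Real.exp (γ * s (Y ω)) * muYE (X ω) * πs (X ω) / (πt (X ω) * muE (X ω) ^ 2)
              - muY (X ω)) * k (Y ω) (X ω) ∂P =
          ∫ ω, ((A (X ω) / muE (X ω) - B (X ω) * muYE (X ω) / muE (X ω) ^ 2) * πs (X ω)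
            + C (X ω) * πt (X ω)) ∂P := by
  intro k hk ⟨Ck, hCk⟩ hk₀ A B C hA hB hC
  have hm := hX.comap_le
  have hXm : Measurable[MeasurableSpace.comap X inferInstance] X := comap_measurable X
  set g₁ : Ω → ℝ := fun ω => Y ω * k (Y ω) (X ω) * (if T ω = t then 1 else 0)
  set g₂ : Ω → ℝ :=
    fun ω => Y ω * exp (γ * s (Y ω)) * k (Y ω) (X ω) * (if T ω = t then 1 else 0)
  set g₃ : Ω → ℝ := fun ω => exp (γ * s (Y ω)) * k (Y ω) (X ω) * (if T ω = t then 1 else 0)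
  set g₄ : Ω → ℝ := fun ω => k (Y ω) (X ω) * (if T ω = t then 1 else 0)
  set gE : Ω → ℝ := fun ω => exp (γ * s (Y ω)) * (if T ω = t then 1 else 0)
  set w₂ : Ω → ℝ := fun ω => πs (X ω) / (πt (X ω) * muE (X ω))
  set w₃ : Ω → ℝ := fun ω => -(muYE (X ω) * πs (X ω) / (πt (X ω) * muE (X ω) ^ 2))
  set w₄ : Ω → ℝ := fun ω => -muY (X ω)
  have hw₂ : StronglyMeasurable[MeasurableSpace.comap X inferInstance] w₂ := by fun_prop
  have hw₃ : StronglyMeasurable[MeasurableSpace.comap X inferInstance] w₃ := by fun_prop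
  have hw₄ : StronglyMeasurable[MeasurableSpace.comap X inferInstance] w₄ := by fun_prop
  have hI : Measurable fun ω => if T ω = t then (1 : ℝ) else 0 :=
    Measurable.ite (hT (measurableSet_singleton t)) measurable_const measurable_const
  have hg₄m : AEStronglyMeasurable g₄ P :=
    ((hk.comp (hY.prodMk hX)).mul hI).aestronglyMeasurable
  have hg₄_le : ∀ᵐ ω ∂P, ‖g₄ ω‖ ≤ Ck := ae_of_all _ fun ω => by
    by_cases hω : T ω = t <;> simp [g₄, hω, hCk, (abs_nonneg _).trans (hCk 0 0)]
  have hg₃_le : ∀ᵐ ω ∂P, ‖g₃ ω‖ ≤ Ck * gE ω := ae_of_all _ fun ω => by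
    by_cases hω : T ω = t <;> simp [g₃, gE, hω, abs_of_pos (exp_pos _), mul_comm Ck,
      mul_le_mul_of_nonneg_left (hCk _ _) (exp_pos _).le]
  have hgE₀ : 0 ≤ᵐ[P] gE := ae_of_all _ fun ω => by
    by_cases hω : T ω = t <;> simp [gE, hω, (exp_pos _).le]
  have hmul_g₄ {f : Ω → ℝ} (hf : Integrable f P) :
      Integrable (fun ω => f ω * k (Y ω) (X ω) * (if T ω = t then 1 else 0)) P := by
    simpa only [mul_assoc] using hf.mul_bdd hg₄m hg₄_le
  have hg₁ : Integrable g₁ P := hmul_g₄ hYInt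
  have hg₂ : Integrable g₂ P := hmul_g₄ hYExpInt
  have hg₃ : Integrable g₃ P := hmul_g₄ hExpInt
  have hg₄ : Integrable g₄ P := Integrable.of_bound hg₄m Ck hg₄_le
  have hgE : Integrable gE P :=
    hExpInt.mul_bdd hI.aestronglyMeasurable (c := 1) (ae_of_all _ fun ω => by
      by_cases hω : T ω = t <;> simp [hω])
  have hπt₀ : ∀ᵐ ω ∂P, 0 < πt (X ω) := hpos.mono fun ω h => hε.trans_le h.1
  have hπs₁ : ∀ᵐ ω ∂P, |πs (X ω)| ≤ 1 := by
    filter_upwards [hπsv, ae_bdd_abs_condExp_of_ae_bdd_abs (R := (1 : ℝ))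
      (f := fun ω => if T ω = 1 - t then (1 : ℝ) else 0)
      (ae_of_all _ fun ω => by split_ifs <;> simp)] with ω h1 h2
    exact h1 ▸ h2
  have hμY : Integrable (fun ω => muY (X ω)) P :=
    (Integrable.div_of_ae_le integrable_condExp (hπt.comp hX).aemeasurable hε
      (hpos.mono fun _ h => h.1)).congr hmuY.symm
  have hμYE : Integrable (fun ω => muYE (X ω)) P :=
    (Integrable.div_of_ae_le integrable_condExp (hπt.comp hX).aemeasurable hε
      (hpos.mono fun _ h => h.1)).congr hmuYE.symm
  have hwg₂ : Integrable (w₂ * g₂) P := by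
    refine hg₂.bdd_mul (c := (ε * ε)⁻¹) (hw₂.mono hm).aestronglyMeasurable ?_
    filter_upwards [hπs₁, hpos, hmuEpos] with ω h1 h2 h3
    exact abs_div_le_inv_of_abs_le_one (mul_pos hε hε) h1
      (mul_le_mul h2.1 h3 hε.le (hε.le.trans h2.1))
  have hwg₃ : Integrable (w₃ * g₃) P := by
    refine integrable_mul_of_norm_le_of_integrable_mul_condExp hm hw₃ hg₃.1 hgE hgE₀ hg₃_le ?_
    refine ((hμYE.mul_bdd (c := ε⁻¹) ((hπs.div hmuEm).comp hX).aestronglyMeasurable ?_).neg).congr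
      ?_
    · filter_upwards [hπs₁, hmuEpos] with ω h1 h2 using abs_div_le_inv_of_abs_le_one hε h1 h2
    · filter_upwards [hmuE, hπt₀, hmuEpos] with ω h1 h2 h3
      have hcE : P[gE|MeasurableSpace.comap X inferInstance] ω = muE (X ω) * πt (X ω) := by
        rw [h1, div_mul_cancel₀ _ h2.ne']
      have : muE (X ω) ≠ 0 := (hε.trans_le h3).ne'
      simp only [Pi.neg_apply, Function.comp_apply, Pi.div_apply, w₃, hcE]
      field_simp
  have hwg₄ : Integrable (w₄ * g₄) P := hμY.neg.mul_bdd hg₄m hg₄_le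
  calc _ = ∫ ω, g₁ ω + w₂ ω * g₂ ω + w₃ ω * g₃ ω + w₄ ω * g₄ ω ∂P :=
        integral_congr_ae (ae_of_all _ fun ω => by simp only [g₁, g₂, g₃, g₄, w₂, w₃, w₄]; ring)
    _ = ∫ ω, P[g₁|MeasurableSpace.comap X inferInstance] ω
          + w₂ ω * P[g₂|MeasurableSpace.comap X inferInstance] ω
          + w₃ ω * P[g₃|MeasurableSpace.comap X inferInstance] ω
          + w₄ ω * P[g₄|MeasurableSpace.comap X inferInstance] ω ∂P := by
        simpa [Fin.sum_univ_four] using integral_sum_mul_eq_integral_sum_mul_condExp (μ := P) hm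
          Finset.univ (w := ![1, w₂, w₃, w₄]) (g := ![g₁, g₂, g₃, g₄])
          (by simp [Fin.forall_fin_succ, stronglyMeasurable_one, hw₂, hw₃, hw₄])
          (by simp [Fin.forall_fin_succ, hg₁, hg₂, hg₃, hg₄])
          (by simp [Fin.forall_fin_succ, hg₁, hwg₂, hwg₃, hwg₄])
    _ = _ := by
        refine integral_congr_ae ?_
        filter_upwards [hk₀, hA, hB, hC, hπt₀, hmuEpos] with ω h0 hAω hBω hCω hπω hμω
        have : muE (X ω) ≠ 0 := (hε.trans_le hμω).ne'
        simp only [w₂, w₃, w₄, h0, Pi.zero_apply, hAω, hBω, hCω]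
        field_simp
        ring

/-- Riesz-representer identity for the outcome component of the efficient
influence function: with `b_t(Y,X)` as in the efficient influence function, for every bounded
measurable `k(Y,X)` with `E[k(Y,X)1{T=t}|σ(X)] = 0` a.s.,
`E[1{T=t} b_t(Y,X) k(Y,X)] = E[(μ_t(Ye^{γs}k;X)/μ₁(X) − μ_t(e^{γs}k;X)μ_Y(X)/μ₁(X)²)π_{1−t}(X)
  + μ_t(Yk;X)π_t(X)]`. -/
theorem riesz_representer_identity
    {Ω : Type*} [MeasurableSpace Ω] (P : Measure Ω) [IsProbabilityMeasure P]
    {p : ℕ} (X : Ω → (Fin p → ℝ)) (T : Ω → ℝ) (Y : Ω → ℝ)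
    (hX : Measurable X) (hT : Measurable T) (hY : Measurable Y)
    (hTval : ∀ ω, T ω = 0 ∨ T ω = 1)
    (t : ℝ) (ht : t = 0 ∨ t = 1)
    (s : ℝ → ℝ) (hs : Measurable s) (γ : ℝ)
    -- versions of the conditional treatment probabilities given `σ(X)`
    (πt πs : (Fin p → ℝ) → ℝ) (hπt : Measurable πt) (hπs : Measurable πs)
    (hπtv : (fun ω => πt (X ω)) =ᵐ[P]
      P[(fun ω => if T ω = t then (1 : ℝ) else 0) | MeasurableSpace.comap X inferInstance])
    (hπsv : (fun ω => πs (X ω)) =ᵐ[P]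
      P[(fun ω => if T ω = 1 - t then (1 : ℝ) else 0) | MeasurableSpace.comap X inferInstance])
    -- positivity
    (ε : ℝ) (hε : 0 < ε)
    (hpos : ∀ᵐ ω ∂P, ε ≤ πt (X ω) ∧ πt (X ω) ≤ 1 - ε)
    -- integrability assumptions
    (hYInt : Integrable Y P)
    (hExpInt : Integrable (fun ω => Real.exp (γ * s (Y ω))) P)
    (hYExpInt : Integrable (fun ω => Y ω * Real.exp (γ * s (Y ω))) P)
    -- versions of the conditional means `μ_t(Y;X)`, `μ₁(X) := μ_t(e^{γs(Y)};X)`,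
    -- `μ_Y(X) := μ_t(Ye^{γs(Y)};X)`
    (muY muE muYE : (Fin p → ℝ) → ℝ)
    (hmuYm : Measurable muY) (hmuEm : Measurable muE) (hmuYEm : Measurable muYE)
    (hmuY : (fun ω => muY (X ω)) =ᵐ[P] fun ω =>
      (P[(fun ω => Y ω * (if T ω = t then (1 : ℝ) else 0)) |
        MeasurableSpace.comap X inferInstance]) ω / πt (X ω))
    (hmuE : (fun ω => muE (X ω)) =ᵐ[P] fun ω =>
      (P[(fun ω => Real.exp (γ * s (Y ω)) * (if T ω = t then (1 : ℝ) else 0)) |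
        MeasurableSpace.comap X inferInstance]) ω / πt (X ω))
    (hmuYE : (fun ω => muYE (X ω)) =ᵐ[P] fun ω =>
      (P[(fun ω => Y ω * Real.exp (γ * s (Y ω)) * (if T ω = t then (1 : ℝ) else 0)) |
        MeasurableSpace.comap X inferInstance]) ω / πt (X ω))
    (hmuEpos : ∀ᵐ ω ∂P, ε ≤ muE (X ω)) :
    -- the identity, for every admissible `k` and versions `A`, `B`, `C` of the conditional
    -- means `μ_t(Ye^{γs(Y)}k(Y,X);X)`, `μ_t(e^{γs(Y)}k(Y,X);X)`, `μ_t(Yk(Y,X);X)`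
    ∀ k : ℝ → (Fin p → ℝ) → ℝ,
      Measurable (fun q : ℝ × (Fin p → ℝ) => k q.1 q.2) →
      (∃ C, ∀ y x, |k y x| ≤ C) →
      ((P[(fun ω => k (Y ω) (X ω) * (if T ω = t then (1 : ℝ) else 0)) |
          MeasurableSpace.comap X inferInstance]) =ᵐ[P] 0) →
      ∀ A B C : (Fin p → ℝ) → ℝ,
        ((fun ω => A (X ω)) =ᵐ[P] fun ω =>
          (P[(fun ω => Y ω * Real.exp (γ * s (Y ω)) * k (Y ω) (X ω) *
              (if T ω = t then (1 : ℝ) else 0)) |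
            MeasurableSpace.comap X inferInstance]) ω / πt (X ω)) →
        ((fun ω => B (X ω)) =ᵐ[P] fun ω =>
          (P[(fun ω => Real.exp (γ * s (Y ω)) * k (Y ω) (X ω) *
              (if T ω = t then (1 : ℝ) else 0)) |
            MeasurableSpace.comap X inferInstance]) ω / πt (X ω)) →
        ((fun ω => C (X ω)) =ᵐ[P] fun ω =>
          (P[(fun ω => Y ω * k (Y ω) (X ω) * (if T ω = t then (1 : ℝ) else 0)) |
            MeasurableSpace.comap X inferInstance]) ω / πt (X ω)) →
        ∫ ω, (if T ω = t then (1 : ℝ) else 0) *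
            (Y ω + Y ω * Real.exp (γ * s (Y ω)) * πs (X ω) / (πt (X ω) * muE (X ω))
              - Real.exp (γ * s (Y ω)) * muYE (X ω) * πs (X ω) / (πt (X ω) * muE (X ω) ^ 2)
              - muY (X ω)) * k (Y ω) (X ω) ∂P =
          ∫ ω, ((A (X ω) / muE (X ω) - B (X ω) * muYE (X ω) / muE (X ω) ^ 2) * πs (X ω)
            + C (X ω) * πt (X ω)) ∂P :=
  riesz_representer_identity_general P X T Y hX hT hY t s γ πt πs hπt hπs hπsv ε hε hpos hYInt
    hExpInt hYExpInt muY muE muYE hmuYm hmuEm hmuYEm hmuY hmuE hmuYE hmuEpos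
end

section
/- Second-order remainder identity (Lemma 1): with Rem := E[ ν̃(X,T,Y) ] − ψ_t(P), one has Rem = E[ ( μ_Y(X)·m̃₁(X) − m̃_Y(X)·μ₁(X) ) / ( π̃_t(X)·m̃₁(X) ) · ( π̃_{1−t}(X)·π_t(X)/m̃₁(X) − π_{1−t}(X)·π̃_t(X)/μ₁(X) ) ]. -/
/-!
Conditionally on `σ(X)`, the plug-in influence function `ν̃` is a combination, with bounded
`σ(X)`-measurable coefficients built from the nuisances, of the four integrable terms
`Y·1{T=t}`, `Y e^{γ s(Y)}·1{T=t}`, `e^{γ s(Y)}·1{T=t}` and `1{T=1-t}`, whose conditional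
expectations are `μ_t(Y;X) π_t`, `μ_Y π_t`, `μ₁ π_t` and `π_{1-t}`. So `E[ν̃] = E[E[ν̃ | X]]`
with `E[ν̃ | X]` an explicit function of `X`, and a field identity splits it into the integrand
of `ψ_t(P)` plus the product remainder.
-/

open MeasureTheory Real

section CondExp

variable {Ω : Type*} {m m₀ : MeasurableSpace Ω} {μ : Measure Ω}

theorem MeasureTheory.Integrable.mul_ite_one {f : Ω → ℝ} (hf : Integrable f μ) {q : Ω → Prop}
    [DecidablePred q] (hq : MeasurableSet {ω | q ω}) :
    Integrable (fun ω => f ω * if q ω then 1 else 0) μ :=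
  (hf.indicator hq).congr (.of_forall fun ω => by by_cases h : q ω <;> simp [h])

theorem condExp_sum_mul_of_bound [IsFiniteMeasure μ] (hm : m ≤ m₀) {ι : Type*} [Fintype ι]
    {h f : ι → Ω → ℝ} (hh : ∀ i, StronglyMeasurable[m] (h i))
    (hb : ∀ i, ∃ C, ∀ ω, |h i ω| ≤ C) (hf : ∀ i, Integrable (f i) μ) :
    μ[fun ω => ∑ i, h i ω * f i ω | m] =ᵐ[μ] fun ω => ∑ i, h i ω * μ[f i | m] ω := by
  choose C hC using hb
  have hbound : ∀ i, ∀ᵐ ω ∂μ, ‖h i ω‖ ≤ C i := fun i => .of_forall (hC i)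
  have hsum : (fun ω => ∑ i, h i ω * f i ω) = ∑ i, h i * f i := by ext ω; simp
  rw [hsum]
  refine (condExp_finsetSum (fun i _ =>
    (hf i).bdd_mul ((hh i).mono hm).aestronglyMeasurable (hbound i)) m).trans ?_
  filter_upwards [ae_all_iff.2 fun i =>
    condExp_stronglyMeasurable_mul_of_bound hm (hh i) (hf i) (C i) (hbound i)] with ω hω
  simp only [Finset.sum_apply]
  exact Finset.sum_congr rfl fun i _ => hω i

end CondExp

theorem abs_div_le_div_of_le {x y B δ : ℝ} (hδ : 0 < δ) (hx : |x| ≤ B) (hy : δ ≤ y) :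
    |x / y| ≤ B / δ := by
  rw [abs_div, abs_of_pos (hδ.trans_le hy)]
  exact div_le_div₀ ((abs_nonneg x).trans hx) hx hδ hy

/-- The coefficients of `ν̃` in the terms `Y·1{T=t}`, `Y e^{γ s(Y)}·1{T=t}`, `e^{γ s(Y)}·1{T=t}`,
`1{T=1-t}`, for nuisances `q = π̃_t`, `m₁ = m̃₁`, `mY = m̃_Y`. -/
noncomputable def plugInWeights {α : Type*} (q m₁ mY : α → ℝ) : Fin 4 → α → ℝ :=
  ![1, fun x => (1 - q x) / (q x * m₁ x), fun x => -((1 - q x) * mY x / (q x * m₁ x ^ 2)),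
    fun x => mY x / m₁ x]

theorem measurable_plugInWeights {α : Type*} [MeasurableSpace α] {q m₁ mY : α → ℝ}
    (hq : Measurable q) (h₁ : Measurable m₁) (hY : Measurable mY) (i : Fin 4) :
    Measurable (plugInWeights q m₁ mY i) := by
  fin_cases i <;> simp [plugInWeights] <;> fun_prop

theorem exists_bound_plugInWeights {α : Type*} {q m₁ mY : α → ℝ} {ε C : ℝ} (hε : 0 < ε)
    (hq : ∀ x, q x ∈ Set.Icc ε (1 - ε)) (h₁ : ∀ x, ε ≤ m₁ x) (hY : ∀ x, |mY x| ≤ C)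
    (i : Fin 4) : ∃ B, ∀ x, |plugInWeights q m₁ mY i x| ≤ B := by
  have hq₁ : ∀ x, |1 - q x| ≤ 1 := fun x => by
    rw [abs_le]; constructor <;> linarith [(hq x).1, (hq x).2]
  have hden : ∀ x, ε * ε ≤ q x * m₁ x := fun x =>
    mul_le_mul (hq x).1 (h₁ x) hε.le (hε.le.trans (hq x).1)
  have hden₂ : ∀ x, ε * ε ^ 2 ≤ q x * m₁ x ^ 2 := fun x =>
    mul_le_mul (hq x).1 (pow_le_pow_left₀ hε.le (h₁ x) 2) (by positivity) (hε.le.trans (hq x).1)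
  fin_cases i
  · exact ⟨1, fun x => by simp [plugInWeights]⟩
  · exact ⟨1 / (ε * ε), fun x => abs_div_le_div_of_le (by positivity) (hq₁ x) (hden x)⟩
  · refine ⟨C / (ε * ε ^ 2), fun x => ?_⟩
    simp only [plugInWeights, Fin.reduceFinMk, Matrix.cons_val, abs_neg]
    refine abs_div_le_div_of_le (by positivity) ?_ (hden₂ x)
    rw [abs_mul]
    exact (mul_le_of_le_one_left (abs_nonneg _) (hq₁ x)).trans (hY x)
  · exact ⟨C / ε, fun x => abs_div_le_div_of_le hε (hY x) (h₁ x)⟩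

theorem plugIn_eq_target_add_remainder {πt πs μY μ₁ μYE q m₁ mY : ℝ} (hq : q ≠ 0)
    (hm₁ : m₁ ≠ 0) (hμ₁ : μ₁ ≠ 0) :
    1 * (μY * πt) + (1 - q) / (q * m₁) * (μYE * πt) + -((1 - q) * mY / (q * m₁ ^ 2)) * (μ₁ * πt)
        + mY / m₁ * πs
      = (μY * πt + μYE / μ₁ * πs) + (μYE * m₁ - mY * μ₁) / (q * m₁) *
        ((1 - q) * πt / m₁ - πs * q / μ₁) := by
  field_simp
  ring

section Remainder

variable {Ω : Type*} [MeasurableSpace Ω] {P : Measure Ω} {p : ℕ}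
  {X : Ω → (Fin p → ℝ)} {T Y : Ω → ℝ} {t γ ε C : ℝ} {s : ℝ → ℝ}
  {πt πs muY muE muYE tπt tm1 tmY : (Fin p → ℝ) → ℝ}

theorem condExp_plugIn_ae_eq_target_add_remainder [IsFiniteMeasure P] (hX : Measurable X)
    (hT : Measurable T)
    (hπsv : (fun ω => πs (X ω)) =ᵐ[P]
      P[(fun ω => if T ω = 1 - t then (1 : ℝ) else 0) | MeasurableSpace.comap X inferInstance])
    (hπt0 : ∀ᵐ ω ∂P, πt (X ω) ≠ 0)
    (hYInt : Integrable Y P)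
    (hExpInt : Integrable (fun ω => Real.exp (γ * s (Y ω))) P)
    (hYExpInt : Integrable (fun ω => Y ω * Real.exp (γ * s (Y ω))) P)
    (hmuY : (fun ω => muY (X ω)) =ᵐ[P] fun ω =>
      (P[(fun ω => Y ω * (if T ω = t then (1 : ℝ) else 0)) |
        MeasurableSpace.comap X inferInstance]) ω / πt (X ω))
    (hmuE : (fun ω => muE (X ω)) =ᵐ[P] fun ω =>
      (P[(fun ω => Real.exp (γ * s (Y ω)) * (if T ω = t then (1 : ℝ) else 0)) |
        MeasurableSpace.comap X inferInstance]) ω / πt (X ω))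
    (hmuYE : (fun ω => muYE (X ω)) =ᵐ[P] fun ω =>
      (P[(fun ω => Y ω * Real.exp (γ * s (Y ω)) * (if T ω = t then (1 : ℝ) else 0)) |
        MeasurableSpace.comap X inferInstance]) ω / πt (X ω))
    (hmuE0 : ∀ᵐ ω ∂P, muE (X ω) ≠ 0)
    (htπtm : Measurable tπt) (htm1m : Measurable tm1) (htmYm : Measurable tmY) (hε : 0 < ε)
    (htπt_mem : ∀ x, tπt x ∈ Set.Icc ε (1 - ε)) (htm1_mem : ∀ x, ε ≤ tm1 x)
    (htmY_bdd : ∀ x, |tmY x| ≤ C) :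
    P[(fun ω => (if T ω = t then (1 : ℝ) else 0) *
          (Y ω + Y ω * Real.exp (γ * s (Y ω)) * (1 - tπt (X ω)) / (tπt (X ω) * tm1 (X ω))
            - Real.exp (γ * s (Y ω)) * (1 - tπt (X ω)) * tmY (X ω) /
                (tπt (X ω) * tm1 (X ω) ^ 2))
        + (if T ω = 1 - t then (1 : ℝ) else 0) * (tmY (X ω) / tm1 (X ω))) |
        MeasurableSpace.comap X inferInstance] =ᵐ[P] fun ω =>
      (muY (X ω) * πt (X ω) + (muYE (X ω) / muE (X ω)) * πs (X ω)) +
      ((muYE (X ω) * tm1 (X ω) - tmY (X ω) * muE (X ω)) / (tπt (X ω) * tm1 (X ω))) *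
        ((1 - tπt (X ω)) * πt (X ω) / tm1 (X ω) - πs (X ω) * tπt (X ω) / muE (X ω)) := by
  have hIt : MeasurableSet {ω | T ω = t} := hT (measurableSet_singleton t)
  have hIs : MeasurableSet {ω | T ω = 1 - t} := hT (measurableSet_singleton (1 - t))
  let f : Fin 4 → Ω → ℝ := ![fun ω => Y ω * (if T ω = t then (1 : ℝ) else 0),
    fun ω => Y ω * Real.exp (γ * s (Y ω)) * (if T ω = t then (1 : ℝ) else 0),
    fun ω => Real.exp (γ * s (Y ω)) * (if T ω = t then (1 : ℝ) else 0),
    fun ω => if T ω = 1 - t then (1 : ℝ) else 0]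
  have hf : ∀ i, Integrable (f i) P := by
    intro i
    fin_cases i
    · exact hYInt.mul_ite_one hIt
    · exact hYExpInt.mul_ite_one hIt
    · exact hExpInt.mul_ite_one hIt
    · simpa [f] using (integrable_const (1 : ℝ)).mul_ite_one (μ := P) hIs
  have hν : (fun ω => (if T ω = t then (1 : ℝ) else 0) *
          (Y ω + Y ω * Real.exp (γ * s (Y ω)) * (1 - tπt (X ω)) / (tπt (X ω) * tm1 (X ω))
            - Real.exp (γ * s (Y ω)) * (1 - tπt (X ω)) * tmY (X ω) /
                (tπt (X ω) * tm1 (X ω) ^ 2))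
        + (if T ω = 1 - t then (1 : ℝ) else 0) * (tmY (X ω) / tm1 (X ω))) =
      fun ω => ∑ i, plugInWeights tπt tm1 tmY i (X ω) * f i ω := by
    ext ω
    simp only [plugInWeights, Fin.sum_univ_four, Matrix.cons_val', Pi.one_apply,
      Matrix.cons_val_fin_one, Fin.isValue, Matrix.cons_val_zero, one_mul, Matrix.cons_val_one,
      Matrix.cons_val, neg_mul, f]
    ring
  rw [hν]
  refine (condExp_sum_mul_of_bound hX.comap_le
    (fun i => ((measurable_plugInWeights htπtm htm1m htmYm i).comp
      (comap_measurable X)).stronglyMeasurable)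
    (fun i => (exists_bound_plugInWeights hε htπt_mem htm1_mem htmY_bdd i).imp
      fun B hB ω => hB (X ω)) hf).trans ?_
  filter_upwards [hmuY, hmuE, hmuYE, hπsv, hπt0, hmuE0] with ω hY₁ hE₁ hYE₁ hπs hπt0 hmuE0
  simp only [Function.comp_apply, Fin.sum_univ_four, Fin.isValue, Matrix.cons_val_zero,
    Matrix.cons_val_one, Matrix.cons_val, f]
  rw [← (eq_div_iff hπt0).1 hY₁, ← (eq_div_iff hπt0).1 hE₁, ← (eq_div_iff hπt0).1 hYE₁, ← hπs]
  exact plugIn_eq_target_add_remainder (hε.trans_le (htπt_mem _).1).ne'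
    (hε.trans_le (htm1_mem _)).ne' hmuE0

theorem integrable_target (hX : Measurable X) (hπs : Measurable πs) (hmuEm : Measurable muE)
    (hmuYEm : Measurable muYE)
    (hπsv : (fun ω => πs (X ω)) =ᵐ[P]
      P[(fun ω => if T ω = 1 - t then (1 : ℝ) else 0) | MeasurableSpace.comap X inferInstance])
    (hε : 0 < ε) (hpos : ∀ᵐ ω ∂P, ε ≤ πt (X ω))
    (hmuY : (fun ω => muY (X ω)) =ᵐ[P] fun ω =>
      (P[(fun ω => Y ω * (if T ω = t then (1 : ℝ) else 0)) |
        MeasurableSpace.comap X inferInstance]) ω / πt (X ω))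
    (hmuYE : (fun ω => muYE (X ω)) =ᵐ[P] fun ω =>
      (P[(fun ω => Y ω * Real.exp (γ * s (Y ω)) * (if T ω = t then (1 : ℝ) else 0)) |
        MeasurableSpace.comap X inferInstance]) ω / πt (X ω))
    (hmuEpos : ∀ᵐ ω ∂P, ε ≤ muE (X ω)) :
    Integrable (fun ω => muY (X ω) * πt (X ω) + (muYE (X ω) / muE (X ω)) * πs (X ω)) P := by
  have hπs_le : ∀ᵐ ω ∂P, |πs (X ω)| ≤ 1 := by
    filter_upwards [hπsv, ae_bdd_abs_condExp_of_ae_bdd_abs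
      (m := MeasurableSpace.comap X inferInstance)
      (f := fun ω => if T ω = 1 - t then (1 : ℝ) else 0) (R := 1)
      (.of_forall fun ω => by split_ifs <;> simp)] with ω hπ hle
    rwa [hπ]
  have hmain : Integrable (fun ω => muY (X ω) * πt (X ω)) P := by
    refine (integrable_condExp (m := MeasurableSpace.comap X inferInstance)
      (f := fun ω => Y ω * (if T ω = t then (1 : ℝ) else 0))).congr ?_
    filter_upwards [hmuY, hpos] with ω hY hπ
    rw [hY, div_mul_cancel₀ _ (hε.trans_le hπ).ne']
  have htilt : Integrable (fun ω => (muYE (X ω) / muE (X ω)) * πs (X ω)) P := by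
    refine ((integrable_condExp (m := MeasurableSpace.comap X inferInstance) (f := fun ω =>
      Y ω * Real.exp (γ * s (Y ω)) * (if T ω = t then (1 : ℝ) else 0))).norm.div_const
        (ε * ε)).mono' (by fun_prop) ?_
    filter_upwards [hmuYE, hpos, hmuEpos, hπs_le] with ω hYE hπ hE hπs
    rw [hYE, div_div, Real.norm_eq_abs, abs_mul]
    exact (mul_le_of_le_one_right (abs_nonneg _) hπs).trans
      (abs_div_le_div_of_le (by positivity) le_rfl (mul_le_mul hπ hE hε.le (hε.le.trans hπ)))
  exact hmain.add htilt

end Remainder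

theorem second_order_remainder_identity_general
    {Ω : Type*} [MeasurableSpace Ω] (P : Measure Ω) [IsProbabilityMeasure P]
    {p : ℕ} (X : Ω → (Fin p → ℝ)) (T : Ω → ℝ) (Y : Ω → ℝ)
    (hX : Measurable X) (hT : Measurable T)
    (t : ℝ)
    (s : ℝ → ℝ) (γ : ℝ)
    -- versions of the conditional treatment probabilities given `σ(X)`
    (πt πs : (Fin p → ℝ) → ℝ) (hπs : Measurable πs)
    (hπsv : (fun ω => πs (X ω)) =ᵐ[P]
      P[(fun ω => if T ω = 1 - t then (1 : ℝ) else 0) | MeasurableSpace.comap X inferInstance])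
    -- positivity
    (ε : ℝ) (hε : 0 < ε)
    (hpos : ∀ᵐ ω ∂P, ε ≤ πt (X ω) ∧ πt (X ω) ≤ 1 - ε)
    -- integrability assumptions
    (hYInt : Integrable Y P)
    (hExpInt : Integrable (fun ω => Real.exp (γ * s (Y ω))) P)
    (hYExpInt : Integrable (fun ω => Y ω * Real.exp (γ * s (Y ω))) P)
    -- versions of the conditional means: `muY = μ_t(Y;X)`, `muE = μ₁(X)`, `muYE = μ_Y(X)`
    (muY muE muYE : (Fin p → ℝ) → ℝ)
    (hmuEm : Measurable muE) (hmuYEm : Measurable muYE)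
    (hmuY : (fun ω => muY (X ω)) =ᵐ[P] fun ω =>
      (P[(fun ω => Y ω * (if T ω = t then (1 : ℝ) else 0)) |
        MeasurableSpace.comap X inferInstance]) ω / πt (X ω))
    (hmuE : (fun ω => muE (X ω)) =ᵐ[P] fun ω =>
      (P[(fun ω => Real.exp (γ * s (Y ω)) * (if T ω = t then (1 : ℝ) else 0)) |
        MeasurableSpace.comap X inferInstance]) ω / πt (X ω))
    (hmuYE : (fun ω => muYE (X ω)) =ᵐ[P] fun ω =>
      (P[(fun ω => Y ω * Real.exp (γ * s (Y ω)) * (if T ω = t then (1 : ℝ) else 0)) |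
        MeasurableSpace.comap X inferInstance]) ω / πt (X ω))
    (hmuEpos : ∀ᵐ ω ∂P, ε ≤ muE (X ω))
    -- nuisance functions `π̃_t`, `m̃₁`, `m̃_Y`
    (tπt tm1 tmY : (Fin p → ℝ) → ℝ)
    (htπtm : Measurable tπt) (htm1m : Measurable tm1) (htmYm : Measurable tmY)
    (htπt_mem : ∀ x, tπt x ∈ Set.Icc ε (1 - ε))
    (htm1_mem : ∀ x, ε ≤ tm1 x)
    (htmY_bdd : ∃ C, ∀ x, |tmY x| ≤ C) :
    -- `Rem = E[ν̃] − ψ_t(P)` equals the second-order product expression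
    (∫ ω, ((if T ω = t then (1 : ℝ) else 0) *
          (Y ω + Y ω * Real.exp (γ * s (Y ω)) * (1 - tπt (X ω)) / (tπt (X ω) * tm1 (X ω))
            - Real.exp (γ * s (Y ω)) * (1 - tπt (X ω)) * tmY (X ω) /
                (tπt (X ω) * tm1 (X ω) ^ 2))
        + (if T ω = 1 - t then (1 : ℝ) else 0) * (tmY (X ω) / tm1 (X ω))) ∂P)
      - (∫ ω, (muY (X ω) * πt (X ω) + (muYE (X ω) / muE (X ω)) * πs (X ω)) ∂P) =
    ∫ ω, ((muYE (X ω) * tm1 (X ω) - tmY (X ω) * muE (X ω)) / (tπt (X ω) * tm1 (X ω))) *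
        ((1 - tπt (X ω)) * πt (X ω) / tm1 (X ω) - πs (X ω) * tπt (X ω) / muE (X ω)) ∂P := by
  obtain ⟨C, hC⟩ := htmY_bdd
  have hπt0 : ∀ᵐ ω ∂P, πt (X ω) ≠ 0 := hpos.mono fun _ h => (hε.trans_le h.1).ne'
  have hmuE0 : ∀ᵐ ω ∂P, muE (X ω) ≠ 0 := hmuEpos.mono fun _ h => (hε.trans_le h).ne'
  have hcond := condExp_plugIn_ae_eq_target_add_remainder hX hT hπsv hπt0 hYInt hExpInt
    hYExpInt hmuY hmuE hmuYE hmuE0 htπtm htm1m htmYm hε htπt_mem htm1_mem hC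
  have hψ := integrable_target hX hπs hmuEm hmuYEm hπsv hε (hpos.mono fun _ h => h.1) hmuY hmuYE
    hmuEpos
  rw [← integral_condExp hX.comap_le, integral_congr_ae hcond,
    ← integral_sub (integrable_condExp.congr hcond) hψ]
  simp only [add_sub_cancel_left]

/-- Second-order remainder identity (Lemma 1): with
`Rem := E[ν̃(X,T,Y)] − ψ_t(P)`, one has
`Rem = E[((μ_Y·m̃₁ − m̃_Y·μ₁)/(π̃_t·m̃₁)) · (π̃_{1−t}·π_t/m̃₁ − π_{1−t}·π̃_t/μ₁)]`. -/
theorem second_order_remainder_identity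
    {Ω : Type*} [MeasurableSpace Ω] (P : Measure Ω) [IsProbabilityMeasure P]
    {p : ℕ} (X : Ω → (Fin p → ℝ)) (T : Ω → ℝ) (Y : Ω → ℝ)
    (hX : Measurable X) (hT : Measurable T) (hY : Measurable Y)
    (hTval : ∀ ω, T ω = 0 ∨ T ω = 1)
    (t : ℝ) (ht : t = 0 ∨ t = 1)
    (s : ℝ → ℝ) (hs : Measurable s) (γ : ℝ)
    -- versions of the conditional treatment probabilities given `σ(X)`
    (πt πs : (Fin p → ℝ) → ℝ) (hπt : Measurable πt) (hπs : Measurable πs)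
    (hπtv : (fun ω => πt (X ω)) =ᵐ[P]
      P[(fun ω => if T ω = t then (1 : ℝ) else 0) | MeasurableSpace.comap X inferInstance])
    (hπsv : (fun ω => πs (X ω)) =ᵐ[P]
      P[(fun ω => if T ω = 1 - t then (1 : ℝ) else 0) | MeasurableSpace.comap X inferInstance])
    -- positivity
    (ε : ℝ) (hε : 0 < ε)
    (hpos : ∀ᵐ ω ∂P, ε ≤ πt (X ω) ∧ πt (X ω) ≤ 1 - ε)
    -- integrability assumptions
    (hYInt : Integrable Y P)
    (hExpInt : Integrable (fun ω => Real.exp (γ * s (Y ω))) P)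
    (hYExpInt : Integrable (fun ω => Y ω * Real.exp (γ * s (Y ω))) P)
    -- versions of the conditional means: `muY = μ_t(Y;X)`, `muE = μ₁(X)`, `muYE = μ_Y(X)`
    (muY muE muYE : (Fin p → ℝ) → ℝ)
    (hmuYm : Measurable muY) (hmuEm : Measurable muE) (hmuYEm : Measurable muYE)
    (hmuY : (fun ω => muY (X ω)) =ᵐ[P] fun ω =>
      (P[(fun ω => Y ω * (if T ω = t then (1 : ℝ) else 0)) |
        MeasurableSpace.comap X inferInstance]) ω / πt (X ω))
    (hmuE : (fun ω => muE (X ω)) =ᵐ[P] fun ω =>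
      (P[(fun ω => Real.exp (γ * s (Y ω)) * (if T ω = t then (1 : ℝ) else 0)) |
        MeasurableSpace.comap X inferInstance]) ω / πt (X ω))
    (hmuYE : (fun ω => muYE (X ω)) =ᵐ[P] fun ω =>
      (P[(fun ω => Y ω * Real.exp (γ * s (Y ω)) * (if T ω = t then (1 : ℝ) else 0)) |
        MeasurableSpace.comap X inferInstance]) ω / πt (X ω))
    (hmuEpos : ∀ᵐ ω ∂P, ε ≤ muE (X ω))
    -- nuisance functions `π̃_t`, `m̃₁`, `m̃_Y`
    (tπt tm1 tmY : (Fin p → ℝ) → ℝ)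
    (htπtm : Measurable tπt) (htm1m : Measurable tm1) (htmYm : Measurable tmY)
    (htπt_mem : ∀ x, tπt x ∈ Set.Icc ε (1 - ε))
    (htm1_mem : ∀ x, ε ≤ tm1 x)
    (htmY_bdd : ∃ C, ∀ x, |tmY x| ≤ C) :
    -- `Rem = E[ν̃] − ψ_t(P)` equals the second-order product expression
    (∫ ω, ((if T ω = t then (1 : ℝ) else 0) *
          (Y ω + Y ω * Real.exp (γ * s (Y ω)) * (1 - tπt (X ω)) / (tπt (X ω) * tm1 (X ω))
            - Real.exp (γ * s (Y ω)) * (1 - tπt (X ω)) * tmY (X ω) /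
                (tπt (X ω) * tm1 (X ω) ^ 2))
        + (if T ω = 1 - t then (1 : ℝ) else 0) * (tmY (X ω) / tm1 (X ω))) ∂P)
      - (∫ ω, (muY (X ω) * πt (X ω) + (muYE (X ω) / muE (X ω)) * πs (X ω)) ∂P) =
    ∫ ω, ((muYE (X ω) * tm1 (X ω) - tmY (X ω) * muE (X ω)) / (tπt (X ω) * tm1 (X ω))) *
        ((1 - tπt (X ω)) * πt (X ω) / tm1 (X ω) - πs (X ω) * tπt (X ω) / muE (X ω)) ∂P :=
  second_order_remainder_identity_general P X T Y hX hT t s γ πt πs hπs hπsv ε hε hpos hYInt hExpInt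
    hYExpInt muY muE muYE hmuEm hmuYEm hmuY hmuE hmuYE hmuEpos tπt tm1 tmY htπtm htm1m htmYm
    htπt_mem htm1_mem htmY_bdd
end

section
/- L² stability of the uncentered influence function (Lemma 2, deterministic core): there exist constants D₁, D₂, D₃ depending only on ε and M such that ‖ν̃ − ν_t(P)‖_{L²(P)} ≤ D₁‖π̃_t−π_t‖ + D₂‖m̃₁−μ₁‖ + D₃‖m̃_Y−μ_Y‖, where ‖f‖ := ( E[f(X)²] )^{1/2} for functions of X and ‖ν̃ − ν_t(P)‖_{L²(P)} := ( E[ (ν̃(X,T,Y) − ν_t(P)(X,T,Y))² ] )^{1/2}. In particular, if the nuisance functions converge to the truth in L² at any rate, then ν̃ converges to ν_t(P) in L²(P). -/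
/-!
On the event where the data and all nuisances lie in a fixed box (with `π_t` and `μ₁` bounded
below by `ε`), the uncentered influence function is a rational function without poles, so it is
`C¹` on the compact convex box and hence Lipschitz in the nuisance coordinates, uniformly in the
data. After replacing `π_{1-t}` by `1 - π_t` (the two conditional probabilities sum to one), the
pointwise error is therefore at most `L (|Δπ| + |Δμ₁| + |Δμ_Y|)`, and squaring, integrating and
taking square roots gives the bound with `D₁ = D₂ = D₃ = √3 L`.
-/

open MeasureTheory Real

universe u

lemma sqrt_add_le_sqrt_add_sqrt {x y : ℝ} (hx : 0 ≤ x) (hy : 0 ≤ y) : √(x + y) ≤ √x + √y := by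
  rw [Real.sqrt_le_left (by positivity)]
  nlinarith [Real.sq_sqrt hx, Real.sq_sqrt hy, Real.sqrt_nonneg x, Real.sqrt_nonneg y]

lemma sq_le_three_mul_of_abs_le {x a b c L : ℝ} (h : |x| ≤ L * (|a| + |b| + |c|)) :
    x ^ 2 ≤ 3 * L ^ 2 * (a ^ 2 + b ^ 2 + c ^ 2) := by
  have hx : x ^ 2 ≤ (L * (|a| + |b| + |c|)) ^ 2 := by
    rw [← sq_abs x]; exact pow_le_pow_left₀ (abs_nonneg x) h 2
  nlinarith [sq_abs a, sq_abs b, sq_abs c, sq_nonneg (|a| - |b|), sq_nonneg (|a| - |c|),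
    sq_nonneg (|b| - |c|), sq_nonneg L]

section L2

variable {α : Type*} [MeasurableSpace α] {μ : Measure α}

lemma memLp_of_mem_Icc [IsFiniteMeasure μ] {f : α → ℝ} {a b : ℝ} (hf : AEStronglyMeasurable f μ)
    (hab : ∀ᵐ x ∂μ, f x ∈ Set.Icc a b) (p : ENNReal) : MemLp f p μ :=
  MemLp.of_bound hf (max |a| |b|) <| by
    filter_upwards [hab] with x hx using abs_le_max_abs_abs hx.1 hx.2

lemma memLp_comp_sub_comp_of_mem_Icc [IsFiniteMeasure μ] {β : Type*} [MeasurableSpace β]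
    {X : α → β} {f g : β → ℝ} {a b : ℝ} (hX : Measurable X) (hf : Measurable f)
    (hg : Measurable g) (hfab : ∀ y, f y ∈ Set.Icc a b) (hgab : ∀ᵐ x ∂μ, g (X x) ∈ Set.Icc a b)
    (p : ENNReal) : MemLp (fun x => f (X x) - g (X x)) p μ :=
  (memLp_of_mem_Icc (hf.comp hX).aestronglyMeasurable (ae_of_all _ fun x => hfab (X x)) p).sub
    (memLp_of_mem_Icc (hg.comp hX).aestronglyMeasurable hgab p)

lemma sqrt_integral_sq_le_of_abs_le {f g₁ g₂ g₃ : α → ℝ} {L : ℝ} (hL : 0 ≤ L)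
    (h₁ : MemLp g₁ 2 μ) (h₂ : MemLp g₂ 2 μ) (h₃ : MemLp g₃ 2 μ)
    (hf : ∀ᵐ x ∂μ, |f x| ≤ L * (|g₁ x| + |g₂ x| + |g₃ x|)) :
    √(∫ x, f x ^ 2 ∂μ) ≤
      √3 * L * √(∫ x, g₁ x ^ 2 ∂μ) + √3 * L * √(∫ x, g₂ x ^ 2 ∂μ) +
        √3 * L * √(∫ x, g₃ x ^ 2 ∂μ) := by
  set A := ∫ x, g₁ x ^ 2 ∂μ
  set B := ∫ x, g₂ x ^ 2 ∂μ
  set C := ∫ x, g₃ x ^ 2 ∂μ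
  have hA : 0 ≤ A := integral_nonneg fun _ => sq_nonneg _
  have hB : 0 ≤ B := integral_nonneg fun _ => sq_nonneg _
  have hC : 0 ≤ C := integral_nonneg fun _ => sq_nonneg _
  have hint : ∫ x, f x ^ 2 ∂μ ≤ 3 * L ^ 2 * (A + B + C) := by
    have h₁₂ : Integrable (fun x => g₁ x ^ 2 + g₂ x ^ 2) μ :=
      h₁.integrable_sq.add h₂.integrable_sq
    have hsum : Integrable (fun x => g₁ x ^ 2 + g₂ x ^ 2 + g₃ x ^ 2) μ :=
      h₁₂.add h₃.integrable_sq
    refine (integral_mono_of_nonneg (ae_of_all _ fun _ => sq_nonneg _) (hsum.const_mul _)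
      (hf.mono fun x hx => sq_le_three_mul_of_abs_le hx)).trans_eq ?_
    rw [integral_const_mul, integral_add h₁₂ h₃.integrable_sq,
      integral_add h₁.integrable_sq h₂.integrable_sq]
  calc √(∫ x, f x ^ 2 ∂μ) ≤ √(3 * L ^ 2 * (A + B + C)) := Real.sqrt_le_sqrt hint
    _ = √3 * L * √(A + B + C) := by
      rw [Real.sqrt_mul (by positivity), Real.sqrt_mul (by norm_num), Real.sqrt_sq hL]
    _ ≤ √3 * L * (√A + √B + √C) := by
      gcongr
      calc √(A + B + C) ≤ √(A + B) + √C := sqrt_add_le_sqrt_add_sqrt (by positivity) hC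
        _ ≤ √A + √B + √C := by gcongr; exact sqrt_add_le_sqrt_add_sqrt hA hB
    _ = √3 * L * √A + √3 * L * √B + √3 * L * √C := by ring

end L2

lemma ContDiffOn.exists_norm_sub_le_mul_norm_sub_snd {E F G : Type*} [NormedAddCommGroup E]
    [NormedSpace ℝ E] [NormedAddCommGroup F] [NormedSpace ℝ F] [NormedAddCommGroup G]
    [NormedSpace ℝ G] {f : E × F → G} {s : Set (E × F)} (hf : ContDiffOn ℝ 1 f s)
    (hs : Convex ℝ s) (hs' : IsCompact s) :
    ∃ L : ℝ, 0 ≤ L ∧ ∀ (z : E) (w w' : F), (z, w) ∈ s → (z, w') ∈ s →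
      ‖f (z, w') - f (z, w)‖ ≤ L * ‖w' - w‖ := by
  obtain ⟨K, hK⟩ := hf.exists_lipschitzOnWith one_ne_zero hs hs'
  refine ⟨K, K.2, fun z w w' hw hw' => ?_⟩
  simpa [← dist_eq_norm, Prod.dist_eq] using hK.dist_le_mul _ hw' _ hw

/-- `ν_t` at `Y = y`, `e^{γ_t s_t(Y)} = e`, `1{T=t} = it`, `1{T=1-t} = is`, `π_t(X) = p`,
`μ₁(X) = m₁`, `μ_Y(X) = mY`, with `π_{1-t}(X)` written as `1 - p`. -/
noncomputable def tiltedInfluence (y e it is p m₁ mY : ℝ) : ℝ :=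
  it * (y + y * e * (1 - p) / (p * m₁) - e * (1 - p) * mY / (p * m₁ ^ 2)) + is * (mY / m₁)

lemma exists_tiltedInfluence_sub_le {ε : ℝ} (hε : 0 < ε) (R : ℝ) :
    ∃ L : ℝ, 0 ≤ L ∧ ∀ y e it is p m₁ mY p' m₁' mY' : ℝ,
      |y| ≤ R → |e| ≤ R → |it| ≤ R → |is| ≤ R →
      p ∈ Set.Icc ε R → p' ∈ Set.Icc ε R → m₁ ∈ Set.Icc ε R → m₁' ∈ Set.Icc ε R →
      |mY| ≤ R → |mY'| ≤ R →
      |tiltedInfluence y e it is p' m₁' mY' - tiltedInfluence y e it is p m₁ mY| ≤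
        L * (|p' - p| + |m₁' - m₁| + |mY' - mY|) := by
  set box : Set ((ℝ × ℝ × ℝ × ℝ) × (ℝ × ℝ × ℝ)) :=
    Set.Icc ((-R, -R, -R, -R), (ε, ε, -R)) ((R, R, R, R), (R, R, R))
  have hsmooth : ContDiffOn ℝ 1 (fun x : (ℝ × ℝ × ℝ × ℝ) × (ℝ × ℝ × ℝ) =>
      tiltedInfluence x.1.1 x.1.2.1 x.1.2.2.1 x.1.2.2.2 x.2.1 x.2.2.1 x.2.2.2)
      {x | ε ≤ x.2.1 ∧ ε ≤ x.2.2.1} := by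
    unfold tiltedInfluence
    fun_prop (disch :=
      rintro x ⟨hp, hm⟩; have := hε.trans_le hp; have := hε.trans_le hm; positivity)
  obtain ⟨L, hL0, hL⟩ := (hsmooth.mono fun x hx => ⟨hx.1.2.1, hx.1.2.2.1⟩ :
    ContDiffOn ℝ 1 _ box).exists_norm_sub_le_mul_norm_sub_snd (convex_Icc _ _) isCompact_Icc
  refine ⟨L, hL0, fun y e it is p m₁ mY p' m₁' mY' hy he hit his hp hp' hm hm' hmY hmY' => ?_⟩
  have hmem : ∀ {p m₁ mY}, p ∈ Set.Icc ε R → m₁ ∈ Set.Icc ε R → |mY| ≤ R →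
      ((y, e, it, is), (p, m₁, mY)) ∈ box := by
    intro p m₁ mY hp hm hmY
    rw [abs_le] at hy he hit his hmY
    exact ⟨⟨⟨hy.1, he.1, hit.1, his.1⟩, hp.1, hm.1, hmY.1⟩,
      ⟨⟨hy.2, he.2, hit.2, his.2⟩, hp.2, hm.2, hmY.2⟩⟩
  refine (hL (y, e, it, is) (p, m₁, mY) (p', m₁', mY') (hmem hp hm hmY)
    (hmem hp' hm' hmY')).trans (mul_le_mul_of_nonneg_left ?_ hL0)
  simp only [Prod.mk_sub_mk, Prod.norm_mk, Real.norm_eq_abs]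
  exact max_le (by linarith [abs_nonneg (m₁' - m₁), abs_nonneg (mY' - mY)])
    (max_le (by linarith [abs_nonneg (p' - p), abs_nonneg (mY' - mY)])
      (by linarith [abs_nonneg (p' - p), abs_nonneg (m₁' - m₁)]))

section ConditionalExpectation

variable {α : Type*} {m m₀ : MeasurableSpace α} {μ : Measure α} [IsFiniteMeasure μ]

lemma integrable_ite_eq_one_zero {β : Type*} [MeasurableSpace β] [MeasurableSingletonClass β]
    [DecidableEq β] {T : α → β} (hT : Measurable T) (t : β) :
    Integrable (fun x => if T x = t then (1 : ℝ) else 0) μ :=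
  Integrable.of_bound (Measurable.ite (hT (measurableSet_singleton t)) measurable_const
    measurable_const).aestronglyMeasurable 1 (ae_of_all _ fun x => by split_ifs <;> simp)

lemma condExp_add_condExp_eq_const {f g : α → ℝ} {c : ℝ} (hm : m ≤ m₀)
    (hf : Integrable f μ) (hg : Integrable g μ) (hfg : ∀ x, f x + g x = c) :
    μ[f|m] + μ[g|m] =ᵐ[μ] fun _ => c := by
  have hfg' : f + g = fun _ => c := funext hfg
  exact (condExp_add hf hg m).symm.trans (by rw [hfg', condExp_const hm])

end ConditionalExpectation

theorem influence_function_L2_stability_general (ε M : ℝ) (hε : 0 < ε) :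
    ∃ D₁ D₂ D₃ : ℝ,
      ∀ (Ω : Type u) [MeasurableSpace Ω] (P : Measure Ω) [IsProbabilityMeasure P]
        (p : ℕ) (X : Ω → (Fin p → ℝ)) (T : Ω → ℝ) (Y : Ω → ℝ),
        Measurable X → Measurable T → Measurable Y →
        (∀ ω, T ω = 0 ∨ T ω = 1) →
        ∀ (t : ℝ), (t = 0 ∨ t = 1) →
        ∀ (s : ℝ → ℝ), Measurable s →
        ∀ (γ : ℝ),
        -- a.s. boundedness of the outcome and of the exponential tilt
        (∀ᵐ ω ∂P, |Y ω| ≤ M) →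
        (∀ᵐ ω ∂P, Real.exp (γ * s (Y ω)) ≤ M) →
        ∀ (πt πs : (Fin p → ℝ) → ℝ), Measurable πt → Measurable πs →
        -- versions of the conditional treatment probabilities given `σ(X)`
        ((fun ω => πt (X ω)) =ᵐ[P]
          P[(fun ω => if T ω = t then (1 : ℝ) else 0) |
            MeasurableSpace.comap X inferInstance]) →
        ((fun ω => πs (X ω)) =ᵐ[P]
          P[(fun ω => if T ω = 1 - t then (1 : ℝ) else 0) |
            MeasurableSpace.comap X inferInstance]) →
        -- positivity
        (∀ᵐ ω ∂P, ε ≤ πt (X ω) ∧ πt (X ω) ≤ 1 - ε) →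
        -- versions of the conditional means `muE = μ₁(X)`, `muYE = μ_Y(X)` with a.s. bounds
        ∀ (muE muYE : (Fin p → ℝ) → ℝ),
        Measurable muE → Measurable muYE →
        ((fun ω => muE (X ω)) =ᵐ[P] fun ω =>
          (P[(fun ω => Real.exp (γ * s (Y ω)) * (if T ω = t then (1 : ℝ) else 0)) |
            MeasurableSpace.comap X inferInstance]) ω / πt (X ω)) →
        ((fun ω => muYE (X ω)) =ᵐ[P] fun ω =>
          (P[(fun ω => Y ω * Real.exp (γ * s (Y ω)) * (if T ω = t then (1 : ℝ) else 0)) |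
            MeasurableSpace.comap X inferInstance]) ω / πt (X ω)) →
        (∀ᵐ ω ∂P, ε ≤ muE (X ω) ∧ muE (X ω) ≤ M) →
        (∀ᵐ ω ∂P, |muYE (X ω)| ≤ M) →
        -- nuisance functions
        ∀ (tπt tm1 tmY : (Fin p → ℝ) → ℝ),
        Measurable tπt → Measurable tm1 → Measurable tmY →
        (∀ x, tπt x ∈ Set.Icc ε (1 - ε)) →
        (∀ x, tm1 x ∈ Set.Icc ε M) →
        (∀ x, tmY x ∈ Set.Icc (-M) M) →
        -- the L² stability bound
        Real.sqrt (∫ ω,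
            (((if T ω = t then (1 : ℝ) else 0) *
                (Y ω + Y ω * Real.exp (γ * s (Y ω)) * (1 - tπt (X ω)) /
                    (tπt (X ω) * tm1 (X ω))
                  - Real.exp (γ * s (Y ω)) * (1 - tπt (X ω)) * tmY (X ω) /
                      (tπt (X ω) * tm1 (X ω) ^ 2))
              + (if T ω = 1 - t then (1 : ℝ) else 0) * (tmY (X ω) / tm1 (X ω)))
            - ((if T ω = t then (1 : ℝ) else 0) *
                (Y ω + Y ω * Real.exp (γ * s (Y ω)) * πs (X ω) / (πt (X ω) * muE (X ω))
                  - Real.exp (γ * s (Y ω)) * πs (X ω) * muYE (X ω) /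
                      (πt (X ω) * muE (X ω) ^ 2))
              + (if T ω = 1 - t then (1 : ℝ) else 0) * (muYE (X ω) / muE (X ω)))) ^ 2 ∂P) ≤
          D₁ * Real.sqrt (∫ ω, (tπt (X ω) - πt (X ω)) ^ 2 ∂P) +
          D₂ * Real.sqrt (∫ ω, (tm1 (X ω) - muE (X ω)) ^ 2 ∂P) +
          D₃ * Real.sqrt (∫ ω, (tmY (X ω) - muYE (X ω)) ^ 2 ∂P) := by
  obtain ⟨L, hL0, hL⟩ := exists_tiltedInfluence_sub_le hε (max M 1)
  have hR : M ≤ max M 1 ∧ 1 ≤ max M 1 := ⟨le_max_left _ _, le_max_right _ _⟩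
  refine ⟨√3 * L, √3 * L, √3 * L, ?_⟩
  intro Ω _ P _ p X T Y hX hT _ hTr t ht s _ γ hYM hEM πt πs hπt _ hπtX hπsX hπtε muE muYE
    hmuE hmuYE _ _ hmuEε hmuYM tπt tm1 tmY htπt htm1 htmY htπtε htm1ε htmYM
  have hπs : ∀ᵐ ω ∂P, πs (X ω) = 1 - πt (X ω) := by
    have hsum := condExp_add_condExp_eq_const (μ := P) (c := 1) hX.comap_le
      (integrable_ite_eq_one_zero hT t) (integrable_ite_eq_one_zero hT (1 - t))
      (fun ω => by rcases hTr ω with h | h <;> rcases ht with rfl | rfl <;> norm_num [h])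
    filter_upwards [hπtX, hπsX, hsum] with ω h₁ h₂ h₃
    simp only [Pi.add_apply] at h₃
    linarith
  refine sqrt_integral_sq_le_of_abs_le hL0
    (memLp_comp_sub_comp_of_mem_Icc hX htπt hπt htπtε hπtε 2)
    (memLp_comp_sub_comp_of_mem_Icc hX htm1 hmuE htm1ε hmuEε 2)
    (memLp_comp_sub_comp_of_mem_Icc hX htmY hmuYE htmYM (hmuYM.mono fun _ h => abs_le.mp h) 2) ?_
  filter_upwards [hYM, hEM, hπtε, hmuEε, hmuYM, hπs] with ω hY hE hπ hm hmY hπsω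
  rw [hπsω]
  have hind : ∀ (b : Prop) [Decidable b], |if b then (1 : ℝ) else 0| ≤ max M 1 := by
    intro b _; split_ifs <;> simp
  exact hL _ _ _ _ _ _ _ _ _ _ (hY.trans hR.1)
    (by rw [abs_of_pos (exp_pos _)]; exact hE.trans hR.1) (hind _) (hind _)
    ⟨hπ.1, by linarith [hπ.2]⟩ ⟨(htπtε _).1, by linarith [(htπtε (X ω)).2]⟩
    ⟨hm.1, hm.2.trans hR.1⟩ ⟨(htm1ε _).1, (htm1ε _).2.trans hR.1⟩
    (hmY.trans hR.1) ((abs_le.mpr (htmYM _)).trans hR.1)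

/-- L² stability of the uncentered influence function (Lemma 2,
deterministic core): there exist constants `D₁, D₂, D₃` depending only on `ε` and `M` such that
`‖ν̃ − ν_t(P)‖_{L²(P)} ≤ D₁‖π̃_t−π_t‖ + D₂‖m̃₁−μ₁‖ + D₃‖m̃_Y−μ_Y‖`. -/
theorem influence_function_L2_stability (ε M : ℝ) (hε : 0 < ε) (hεM : ε ≤ M) :
    ∃ D₁ D₂ D₃ : ℝ,
      ∀ (Ω : Type u) [MeasurableSpace Ω] (P : Measure Ω) [IsProbabilityMeasure P]
        (p : ℕ) (X : Ω → (Fin p → ℝ)) (T : Ω → ℝ) (Y : Ω → ℝ),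
        Measurable X → Measurable T → Measurable Y →
        (∀ ω, T ω = 0 ∨ T ω = 1) →
        ∀ (t : ℝ), (t = 0 ∨ t = 1) →
        ∀ (s : ℝ → ℝ), Measurable s →
        ∀ (γ : ℝ),
        -- a.s. boundedness of the outcome and of the exponential tilt
        (∀ᵐ ω ∂P, |Y ω| ≤ M) →
        (∀ᵐ ω ∂P, Real.exp (γ * s (Y ω)) ≤ M) →
        ∀ (πt πs : (Fin p → ℝ) → ℝ), Measurable πt → Measurable πs →
        -- versions of the conditional treatment probabilities given `σ(X)`
        ((fun ω => πt (X ω)) =ᵐ[P]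
          P[(fun ω => if T ω = t then (1 : ℝ) else 0) |
            MeasurableSpace.comap X inferInstance]) →
        ((fun ω => πs (X ω)) =ᵐ[P]
          P[(fun ω => if T ω = 1 - t then (1 : ℝ) else 0) |
            MeasurableSpace.comap X inferInstance]) →
        -- positivity
        (∀ᵐ ω ∂P, ε ≤ πt (X ω) ∧ πt (X ω) ≤ 1 - ε) →
        -- versions of the conditional means `muE = μ₁(X)`, `muYE = μ_Y(X)` with a.s. bounds
        ∀ (muE muYE : (Fin p → ℝ) → ℝ),
        Measurable muE → Measurable muYE →
        ((fun ω => muE (X ω)) =ᵐ[P] fun ω =>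
          (P[(fun ω => Real.exp (γ * s (Y ω)) * (if T ω = t then (1 : ℝ) else 0)) |
            MeasurableSpace.comap X inferInstance]) ω / πt (X ω)) →
        ((fun ω => muYE (X ω)) =ᵐ[P] fun ω =>
          (P[(fun ω => Y ω * Real.exp (γ * s (Y ω)) * (if T ω = t then (1 : ℝ) else 0)) |
            MeasurableSpace.comap X inferInstance]) ω / πt (X ω)) →
        (∀ᵐ ω ∂P, ε ≤ muE (X ω) ∧ muE (X ω) ≤ M) →
        (∀ᵐ ω ∂P, |muYE (X ω)| ≤ M) →
        -- nuisance functions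
        ∀ (tπt tm1 tmY : (Fin p → ℝ) → ℝ),
        Measurable tπt → Measurable tm1 → Measurable tmY →
        (∀ x, tπt x ∈ Set.Icc ε (1 - ε)) →
        (∀ x, tm1 x ∈ Set.Icc ε M) →
        (∀ x, tmY x ∈ Set.Icc (-M) M) →
        -- the L² stability bound
        Real.sqrt (∫ ω,
            (((if T ω = t then (1 : ℝ) else 0) *
                (Y ω + Y ω * Real.exp (γ * s (Y ω)) * (1 - tπt (X ω)) /
                    (tπt (X ω) * tm1 (X ω))
                  - Real.exp (γ * s (Y ω)) * (1 - tπt (X ω)) * tmY (X ω) /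
                      (tπt (X ω) * tm1 (X ω) ^ 2))
              + (if T ω = 1 - t then (1 : ℝ) else 0) * (tmY (X ω) / tm1 (X ω)))
            - ((if T ω = t then (1 : ℝ) else 0) *
                (Y ω + Y ω * Real.exp (γ * s (Y ω)) * πs (X ω) / (πt (X ω) * muE (X ω))
                  - Real.exp (γ * s (Y ω)) * πs (X ω) * muYE (X ω) /
                      (πt (X ω) * muE (X ω) ^ 2))
              + (if T ω = 1 - t then (1 : ℝ) else 0) * (muYE (X ω) / muE (X ω)))) ^ 2 ∂P) ≤
          D₁ * Real.sqrt (∫ ω, (tπt (X ω) - πt (X ω)) ^ 2 ∂P) +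
          D₂ * Real.sqrt (∫ ω, (tm1 (X ω) - muE (X ω)) ^ 2 ∂P) +
          D₃ * Real.sqrt (∫ ω, (tmY (X ω) - muYE (X ω)) ^ 2 ∂P) :=
  influence_function_L2_stability_general ε M hε
end
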